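/- arXiv:math/0401099 — 8 statements merged into one kernel-verified Lean document; each statement's English description precedes it below -/
import Mathlib

section
/- For every integer n ≥ 2 and real λ > 0, lim_{X→∞} ∫_X^{λX} f_{n+1}(t)/t^n dt = (ln λ)/(n−1)!. -/
open Real MeasureTheory Filter Finset

noncomputable def f (n : ℕ) (t : ℝ) : ℝ :=
  if n % 2 = 1 then
    (-1 : ℝ) ^ (n / 2) *
      (Real.sin t - ∑ k ∈ Finset.range (n / 2), (-1 : ℝ) ^ k * t ^ (2 * k + 1) / (Nat.factorial (2 * k + 1)))
  else
    (-1 : ℝ) ^ (n / 2) *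
      (Real.cos t - ∑ k ∈ Finset.range (n / 2), (-1 : ℝ) ^ k * t ^ (2 * k) / (Nat.factorial (2 * k)))

/-! The recursion `f (n + 2) t = t ^ n / n! - f n t`, started from the bounded `f 0 = cos`
and `f 1 = sin`, shows `f (n + 1) t = t ^ (n - 1) / (n - 1)! + O(t ^ (n - 2))`. So the
integrand is `t⁻¹ / (n - 1)! + O(t⁻²)`: the main part integrates to exactly
`log λ / (n - 1)!` over `[X, λX]`, and the error integrates to `O(X⁻¹)`. -/

theorem continuous_f (n : ℕ) : Continuous (f n) := by
  unfold f
  split <;> fun_prop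

theorem f_add_two (n : ℕ) (t : ℝ) : f (n + 2) t = t ^ n / n.factorial - f n t := by
  have hsq (k : ℕ) : (-1 : ℝ) ^ (k + 1) * (-1) ^ k = -1 := by
    rw [← pow_add, show k + 1 + k = 2 * k + 1 by ring, pow_succ, pow_mul]; norm_num
  obtain ⟨k, rfl | rfl⟩ := Nat.even_or_odd' n
  · simp only [f, show (2 * k + 2) % 2 = 0 by omega, show (2 * k) % 2 = 0 by omega,
      show (2 * k + 2) / 2 = k + 1 by omega, show 2 * k / 2 = k by omega,
      sum_range_succ, zero_ne_one, if_false]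
    linear_combination (-(t ^ (2 * k) / (2 * k).factorial)) * hsq k
  · simp only [f, show (2 * k + 1 + 2) % 2 = 1 by omega, show (2 * k + 1) % 2 = 1 by omega,
      show (2 * k + 1 + 2) / 2 = k + 1 by omega, show (2 * k + 1) / 2 = k by omega,
      sum_range_succ, if_true]
    linear_combination (-(t ^ (2 * k + 1) / (2 * k + 1).factorial)) * hsq k

theorem abs_f_succ_le (m : ℕ) {t : ℝ} (ht : 1 ≤ t) : |f (m + 1) t| ≤ (m + 1) * t ^ m := by
  induction m using Nat.twoStepInduction with
  | zero => simpa [f] using abs_sin_le_one t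
  | one =>
    have h : f 2 t = 1 - cos t := by simp [f]
    rw [h, abs_le]
    constructor <;> push_cast <;> linarith [cos_le_one t, neg_one_le_cos t]
  | more m ih _ =>
    have hpow : t ^ (m + 1) ≤ t ^ (m + 2) := pow_le_pow_right₀ ht (by omega)
    have hfac : t ^ (m + 1) / (m + 1).factorial ≤ t ^ (m + 2) :=
      (div_le_self (by positivity) (by exact_mod_cast (m + 1).factorial_pos)).trans hpow
    have hih : |f (m + 1) t| ≤ (m + 1) * t ^ (m + 2) :=
      ih.trans (by gcongr; omega)
    have hpos : 0 ≤ t ^ (m + 2) := by positivity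
    rw [f_add_two]
    refine (abs_sub _ _).trans ?_
    rw [abs_of_nonneg (by positivity)]
    push_cast
    linarith

theorem isBigO_f_succ_div_pow (m : ℕ) :
    (fun t => f (m + 1) t / t ^ (m + 2)) =O[atTop] fun t => (t ^ 2)⁻¹ := by
  refine Asymptotics.IsBigO.of_bound (m + 1) ?_
  filter_upwards [eventually_ge_atTop 1] with t ht
  have ht0 : 0 < t := one_pos.trans_le ht
  rw [Real.norm_eq_abs, abs_div, abs_of_pos (pow_pos ht0 _), norm_inv, norm_pow,
    Real.norm_of_nonneg ht0.le, div_le_iff₀ (by positivity)]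
  calc |f (m + 1) t| ≤ (m + 1) * t ^ m := abs_f_succ_le m ht
    _ = (m + 1) * (t ^ 2)⁻¹ * t ^ (m + 2) := by field_simp; ring

theorem tendsto_intervalIntegral_mul_of_isBigO_inv_sq {g : ℝ → ℝ}
    (hg : g =O[atTop] fun t => (t ^ 2)⁻¹) {lam : ℝ} (hlam : 0 < lam) :
    Tendsto (fun X => ∫ t in X..lam * X, g t) atTop (nhds 0) := by
  obtain ⟨C, hC0, hC⟩ := hg.exists_pos
  obtain ⟨T, hT⟩ := eventually_atTop.1 hC.bound
  set μ := min 1 lam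
  have hμ : 0 < μ := lt_min one_pos hlam
  have hbound :
      ∀ᶠ X in atTop, ‖∫ t in X..lam * X, g t‖ ≤ C * |lam - 1| / μ ^ 2 * X⁻¹ := by
    filter_upwards [eventually_ge_atTop (max T 1 / μ)] with X hX
    have hμX : max T 1 ≤ μ * X := by rwa [div_le_iff₀' hμ] at hX
    have hX : 0 < X := pos_of_mul_pos_right (by linarith [le_max_right T 1]) hμ.le
    refine (intervalIntegral.norm_integral_le_of_norm_le_const (C := C * ((μ * X) ^ 2)⁻¹)
      fun t ht => ?_).trans_eq ?_
    · have ht : μ * X ≤ t := by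
        rw [min_mul_of_nonneg _ _ hX.le, one_mul]
        exact ht.1.le
      have ht0 : 0 ≤ t := by linarith [le_max_right T 1]
      calc ‖g t‖ ≤ C * ‖(t ^ 2)⁻¹‖ := hT t (by linarith [le_max_left T 1])
        _ = C * (t ^ 2)⁻¹ := by rw [norm_inv, norm_pow, Real.norm_of_nonneg ht0]
        _ ≤ C * ((μ * X) ^ 2)⁻¹ := by gcongr
    · rw [← sub_one_mul, abs_mul, abs_of_pos hX]
      field_simp
  refine squeeze_zero_norm' hbound ?_
  simpa using tendsto_inv_atTop_zero.const_mul (C * |lam - 1| / μ ^ 2)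

theorem intervalIntegral_f_add_three_div_pow (m : ℕ) {a b : ℝ} (ha : 0 < a) (hb : 0 < b) :
    ∫ t in a..b, f (m + 3) t / t ^ (m + 2) =
      log (b / a) / (m + 1).factorial - ∫ t in a..b, f (m + 1) t / t ^ (m + 2) := by
  have hne : ∀ t ∈ Set.uIcc a b, t ≠ 0 := fun t ht => ((lt_min ha hb).trans_le ht.1).ne'
  have hsplit : ∀ t ∈ Set.uIcc a b, f (m + 3) t / t ^ (m + 2) =
      ((m + 1).factorial : ℝ)⁻¹ * t⁻¹ - f (m + 1) t / t ^ (m + 2) := by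
    intro t ht
    have ht0 := hne t ht
    rw [f_add_two]
    field_simp
    ring
  have hinv : IntervalIntegrable (fun t => ((m + 1).factorial : ℝ)⁻¹ * t⁻¹) volume a b :=
    (continuousOn_const.mul (continuousOn_inv₀.mono hne)).intervalIntegrable
  have hrem : IntervalIntegrable (fun t => f (m + 1) t / t ^ (m + 2)) volume a b :=
    ((continuous_f _).continuousOn.div (continuous_pow _).continuousOn
      fun t ht => pow_ne_zero _ (hne t ht)).intervalIntegrable
  rw [intervalIntegral.integral_congr hsplit, intervalIntegral.integral_sub hinv hrem,
    intervalIntegral.integral_const_mul, integral_inv_of_pos ha hb, inv_mul_eq_div]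

theorem stmt_4 (n : ℕ) (hn : 2 ≤ n) (lam : ℝ) (hlam : 0 < lam) :
    Tendsto (fun X : ℝ => ∫ t in X..(lam * X), f (n + 1) t / t ^ n) atTop
      (nhds (Real.log lam / (Nat.factorial (n - 1)))) := by
  obtain ⟨m, rfl⟩ : ∃ m, n = m + 2 := ⟨n - 2, by omega⟩
  have hrem := (tendsto_intervalIntegral_mul_of_isBigO_inv_sq (isBigO_f_succ_div_pow m)
    hlam).const_sub (log lam / (m + 1).factorial)
  rw [sub_zero] at hrem
  refine hrem.congr' ?_
  filter_upwards [eventually_gt_atTop 0] with X hX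
  rw [intervalIntegral_f_add_three_div_pow m hX (mul_pos hlam hX), mul_div_cancel_right₀ _ hX.ne']
end

section
/- For every integer n ≥ 2, ∫₁^X f_{n+1}(t)/t^n dt tends to +∞ as X → ∞. -/
open Real MeasureTheory Filter Finset

lemma f_cont (N : ℕ) : Continuous (f N) := by
  unfold f
  by_cases h : N % 2 = 1 <;> simp only [h, if_true, if_false] <;> fun_prop

lemma f_key (k : ℕ) (t : ℝ) (ht : 1 ≤ t) :
    t ^ (k+1) / (Nat.factorial (k+1) : ℝ) - (k+2) * t ^ k ≤ f (k+3) t := by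
  have ht0 : (0:ℝ) < t := lt_of_lt_of_le one_pos ht
  rcases Nat.even_or_odd k with ⟨j, hj⟩ | ⟨j, hj⟩
  · subst hj
    have hj2 : j + j = 2 * j := by ring
    rw [hj2]
    have h1 : (2*j+3) % 2 = 1 := by omega
    have h2 : (2*j+3) / 2 = j + 1 := by omega
    simp only [f, h1, h2, reduceIte]
    rw [Finset.sum_range_succ]
    set S := ∑ x ∈ Finset.range j, (-1:ℝ) ^ x * t ^ (2*x+1) / (Nat.factorial (2*x+1) : ℝ) with hSdef
    have hp : ((-1:ℝ))^(j+1) * (-1)^j = -1 := by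
      rw [← pow_add]; exact Odd.neg_one_pow ⟨j, by ring⟩
    have hexp : (-1:ℝ)^(j+1) * (Real.sin t - (S + (-1)^j * t^(2*j+1) / (Nat.factorial (2*j+1) : ℝ))) =
        (-1:ℝ)^(j+1) * Real.sin t - (-1:ℝ)^(j+1) * S + t^(2*j+1) / (Nat.factorial (2*j+1) : ℝ) := by
      have h3 : (-1:ℝ)^(j+1) * ((-1:ℝ)^j * t^(2*j+1) / (Nat.factorial (2*j+1) : ℝ)) =
          (((-1:ℝ)^(j+1) * (-1)^j)) * (t^(2*j+1) / (Nat.factorial (2*j+1) : ℝ)) := by ring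
      rw [mul_sub, mul_add, h3, hp]; ring
    rw [hexp]
    have hpow : (1:ℝ) ≤ t ^ (2*j) := one_le_pow₀ ht
    have hsin : -1 ≤ (-1:ℝ)^(j+1) * Real.sin t := by
      have h4 : |(-1:ℝ)^(j+1) * Real.sin t| ≤ 1 := by
        rw [abs_mul, abs_pow, abs_neg, abs_one, one_pow, one_mul]
        exact abs_sin_le_one t
      linarith [neg_abs_le ((-1:ℝ)^(j+1) * Real.sin t), abs_le.mp h4]
    have hSbound : |S| ≤ j * t ^ (2*j) := by
      calc |S| ≤ ∑ x ∈ Finset.range j, |(-1:ℝ) ^ x * t ^ (2*x+1) / (Nat.factorial (2*x+1) : ℝ)| :=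
            Finset.abs_sum_le_sum_abs _ _
        _ ≤ ∑ x ∈ Finset.range j, t ^ (2*j) := by
            apply Finset.sum_le_sum
            intro x hx
            have hx' : x < j := Finset.mem_range.mp hx
            rw [abs_div, abs_mul, abs_pow, abs_pow, abs_neg, abs_one, one_pow, one_mul,
              abs_of_pos ht0, Nat.abs_cast]
            have hf1 : (1:ℝ) ≤ (Nat.factorial (2*x+1) : ℝ) := by
              exact_mod_cast Nat.one_le_iff_ne_zero.mpr (Nat.factorial_ne_zero _)
            calc t ^ (2*x+1) / (Nat.factorial (2*x+1) : ℝ) ≤ t ^ (2*x+1) := by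
                  apply div_le_self (by positivity) hf1
              _ ≤ t ^ (2*j) := pow_le_pow_right₀ ht (by omega)
        _ = j * t ^ (2*j) := by rw [Finset.sum_const, Finset.card_range]; ring
    have hSle : (-1:ℝ)^(j+1) * S ≤ j * t ^ (2*j) := by
      have h5 : |(-1:ℝ)^(j+1) * S| = |S| := by
        rw [abs_mul, abs_pow, abs_neg, abs_one, one_pow, one_mul]
      linarith [le_abs_self ((-1:ℝ)^(j+1) * S), hSbound, h5.le]
    have hX : 0 ≤ (j:ℝ) * t^(2*j) := by positivity
    push_cast
    linarith
  · subst hj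
    have h1 : (2*j+1+3) % 2 = 0 := by omega
    have h2 : (2*j+1+3) / 2 = j + 2 := by omega
    have h1' : ¬ ((2*j+1+3) % 2 = 1) := by omega
    simp only [f, h1', h2, reduceIte]
    rw [Finset.sum_range_succ]
    set S := ∑ x ∈ Finset.range (j+1), (-1:ℝ) ^ x * t ^ (2*x) / (Nat.factorial (2*x) : ℝ) with hSdef
    have hp : ((-1:ℝ))^(j+2) * (-1)^(j+1) = -1 := by
      rw [← pow_add]; exact Odd.neg_one_pow ⟨j+1, by ring⟩
    have hexp : (-1:ℝ)^(j+2) * (Real.cos t - (S + (-1)^(j+1) * t^(2*(j+1)) / (Nat.factorial (2*(j+1)) : ℝ))) =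
        (-1:ℝ)^(j+2) * Real.cos t - (-1:ℝ)^(j+2) * S + t^(2*(j+1)) / (Nat.factorial (2*(j+1)) : ℝ) := by
      have h3 : (-1:ℝ)^(j+2) * ((-1:ℝ)^(j+1) * t^(2*(j+1)) / (Nat.factorial (2*(j+1)) : ℝ)) =
          (((-1:ℝ)^(j+2) * (-1)^(j+1))) * (t^(2*(j+1)) / (Nat.factorial (2*(j+1)) : ℝ)) := by ring
      rw [mul_sub, mul_add, h3, hp]; ring
    rw [hexp]
    have hpow : (1:ℝ) ≤ t ^ (2*j+1) := one_le_pow₀ ht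
    have hcos : -1 ≤ (-1:ℝ)^(j+2) * Real.cos t := by
      have h4 : |(-1:ℝ)^(j+2) * Real.cos t| ≤ 1 := by
        rw [abs_mul, abs_pow, abs_neg, abs_one, one_pow, one_mul]
        exact abs_cos_le_one t
      linarith [neg_abs_le ((-1:ℝ)^(j+2) * Real.cos t), abs_le.mp h4]
    have hSbound : |S| ≤ (j+1) * t ^ (2*j+1) := by
      calc |S| ≤ ∑ x ∈ Finset.range (j+1), |(-1:ℝ) ^ x * t ^ (2*x) / (Nat.factorial (2*x) : ℝ)| :=
            Finset.abs_sum_le_sum_abs _ _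
        _ ≤ ∑ x ∈ Finset.range (j+1), t ^ (2*j+1) := by
            apply Finset.sum_le_sum
            intro x hx
            have hx' : x < j + 1 := Finset.mem_range.mp hx
            rw [abs_div, abs_mul, abs_pow, abs_pow, abs_neg, abs_one, one_pow, one_mul,
              abs_of_pos ht0, Nat.abs_cast]
            have hf1 : (1:ℝ) ≤ (Nat.factorial (2*x) : ℝ) := by
              exact_mod_cast Nat.one_le_iff_ne_zero.mpr (Nat.factorial_ne_zero _)
            calc t ^ (2*x) / (Nat.factorial (2*x) : ℝ) ≤ t ^ (2*x) := by
                  apply div_le_self (by positivity) hf1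
              _ ≤ t ^ (2*j+1) := pow_le_pow_right₀ ht (by omega)
        _ = (j+1) * t ^ (2*j+1) := by rw [Finset.sum_const, Finset.card_range]; push_cast; ring
    have hSle : (-1:ℝ)^(j+2) * S ≤ (j+1) * t ^ (2*j+1) := by
      have h5 : |(-1:ℝ)^(j+2) * S| = |S| := by
        rw [abs_mul, abs_pow, abs_neg, abs_one, one_pow, one_mul]
      linarith [le_abs_self ((-1:ℝ)^(j+2) * S), hSbound, h5.le]
    have hexp2 : 2*(j+1) = 2*j+1+1 := by omega
    rw [hexp2] at *
    have hX : 0 ≤ (j:ℝ) * t^(2*j+1) := by positivity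
    push_cast
    linarith

theorem stmt_5 (n : ℕ) (hn : 2 ≤ n) :
    Tendsto (fun X : ℝ => ∫ t in (1:ℝ)..X, f (n + 1) t / t ^ n) atTop atTop := by
  obtain ⟨k, rfl⟩ : ∃ k, n = k + 2 := ⟨n - 2, by omega⟩
  clear hn
  set F : ℝ := (Nat.factorial (k+1) : ℝ) with hF
  have hF0 : 0 < F := by positivity
  set c : ℝ := 1 / (2 * F) with hc
  have hc0 : 0 < c := by positivity
  set T : ℝ := max 1 (2 * (k+2) * F) with hT
  have hT1 : (1:ℝ) ≤ T := le_max_left _ _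
  have hT0 : 0 < T := lt_of_lt_of_le one_pos hT1
  -- pointwise bound
  have hbound : ∀ t : ℝ, T ≤ t → c / t ≤ f (k+2+1) t / t ^ (k+2) := by
    intro t htT
    have ht1 : 1 ≤ t := le_trans hT1 htT
    have ht0 : (0:ℝ) < t := lt_of_lt_of_le one_pos ht1
    have htb : 2 * (k+2) * F ≤ t := le_trans (le_max_right _ _) htT
    have hkey := f_key k t ht1
    push_cast at hkey
    rw [← hF] at hkey
    rw [show k + 2 + 1 = k + 3 from rfl]
    have h2 : c * t ^ (k+1) ≤ f (k+3) t := by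
      have hp1 : t ^ (k+1) = t ^ k * t := pow_succ t k
      have hpk : (0:ℝ) < t ^ k := pow_pos ht0 k
      have h3 : ((k:ℝ)+2) * t ^ k ≤ t ^ k * t / (2 * F) := by
        rw [le_div_iff₀ (by positivity)]
        calc ((k:ℝ)+2) * t ^ k * (2 * F) = t ^ k * (2 * ((k:ℝ)+2) * F) := by ring
          _ ≤ t ^ k * t := by
              apply mul_le_mul_of_nonneg_left _ hpk.le
              exact_mod_cast htb
      rw [hc]
      rw [hp1] at hkey ⊢
      have h4 : t ^ k * t / F - ((k:ℝ)+2) * t ^ k ≤ f (k+3) t := hkey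
      have h5 : t ^ k * t / (2*F) = t ^ k * t / F - t ^ k * t / (2*F) := by
        field_simp; ring
      calc 1 / (2*F) * (t ^ k * t) = t ^ k * t / (2*F) := by ring
        _ ≤ t ^ k * t / F - ((k:ℝ)+2) * t ^ k := by rw [h5]; linarith
        _ ≤ f (k+3) t := h4
    have hpow : t ^ (k+2) = t ^ (k+1) * t := pow_succ t (k+1)
    rw [hpow]
    rw [div_le_div_iff₀ ht0 (by positivity)]
    calc c * (t ^ (k+1) * t) = (c * t ^ (k+1)) * t := by ring
      _ ≤ f (k+3) t * t := by
          apply mul_le_mul_of_nonneg_right h2 ht0.le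
  -- integrability
  have hfc : Continuous (f (k+2+1)) := f_cont _
  have hint : ∀ a b : ℝ, 1 ≤ a → 1 ≤ b →
      IntervalIntegrable (fun t => f (k+2+1) t / t ^ (k+2)) volume a b := by
    intro a b ha hb
    apply ContinuousOn.intervalIntegrable
    apply ContinuousOn.div hfc.continuousOn (continuous_pow (k+2)).continuousOn
    intro x hx
    have hx1 : 1 ≤ x := le_trans (le_min ha hb) hx.1
    positivity
  have hintc : ∀ a b : ℝ, 1 ≤ a → 1 ≤ b →
      IntervalIntegrable (fun t : ℝ => c / t) volume a b := by
    intro a b ha hb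
    apply ContinuousOn.intervalIntegrable
    apply ContinuousOn.div continuousOn_const continuousOn_id
    intro x hx
    have hx1 : 1 ≤ x := le_trans (le_min ha hb) hx.1
    positivity
  set K : ℝ := ∫ t in (1:ℝ)..T, f (k+2+1) t / t ^ (k+2) with hK
  have hL : Tendsto (fun X : ℝ => K + c * Real.log (X / T)) atTop atTop := by
    apply tendsto_atTop_add_const_left
    apply Tendsto.const_mul_atTop hc0
    exact Real.tendsto_log_atTop.comp (tendsto_id.atTop_div_const hT0)
  apply tendsto_atTop_mono' atTop _ hL
  filter_upwards [eventually_ge_atTop T] with X hX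
  have hX1 : 1 ≤ X := le_trans hT1 hX
  have hsplit : (∫ t in (1:ℝ)..X, f (k+2+1) t / t ^ (k+2)) =
      K + ∫ t in T..X, f (k+2+1) t / t ^ (k+2) := by
    rw [hK]
    exact (intervalIntegral.integral_add_adjacent_intervals (hint 1 T le_rfl hT1)
      (hint T X hT1 hX1)).symm
  have hmono : (∫ t in T..X, c / t) ≤ ∫ t in T..X, f (k+2+1) t / t ^ (k+2) := by
    apply intervalIntegral.integral_mono_on hX (hintc T X hT1 hX1) (hint T X hT1 hX1)
    intro t ht
    exact hbound t ht.1
  have hval : (∫ t in T..X, c / t) = c * Real.log (X / T) := by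
    have h0 : (0:ℝ) ∉ Set.uIcc T X := by
      rw [Set.uIcc_of_le hX]
      intro h
      exact absurd h.1 (by linarith)
    simp_rw [div_eq_mul_one_div c]
    rw [intervalIntegral.integral_const_mul, integral_one_div h0]
  rw [hsplit]
  rw [hval] at hmono
  linarith
end

section
/- For all integers m, q with 1 ≤ q ≤ m and all real t, (sin t)^{2m} = (1/2^{2m−1}) Σ_{k=1}^m C(2m, m−k) (−1)^{k+q} f_{2q}(2kt). -/
open Real MeasureTheory Filter Finset

/-! Expanding `(e^{it} - e^{-it})^{2m}` by the binomial theorem and pairing the terms `i` and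
`2m - i` gives `4^m sin^{2m} t = C(2m,m) + 2 ∑_{k=1}^m (-1)^k C(2m,m-k) cos 2kt`. Replacing
`cos 2kt` by `(-1)^q f_{2q}(2kt)` subtracts a Taylor polynomial, which contributes the moments
`∑_k (-1)^k C(2m,m-k) k^{2j}` for `j < q ≤ m`. By the same pairing, `C(2m,m) 0^{2j}` plus
twice such a moment is, up to sign, the `2m`-th forward difference of `(x - m)^{2j}` at `0`, which
vanishes since `2j < 2m`. So only `j = 0` contributes, and its `-C(2m,m)/2` cancels the
constant term. -/

lemma neg_one_pow_mul_self {R : Type*} [Monoid R] [HasDistribNeg R] (n : ℕ) :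
    (-1 : R) ^ n * (-1) ^ n = 1 := by
  rw [← pow_add, ← two_mul, pow_mul, neg_one_sq, one_pow]

lemma neg_one_pow_tsub {R : Type*} [Monoid R] [HasDistribNeg R] {k n : ℕ} (h : k ≤ n) :
    (-1 : R) ^ (n - k) = (-1) ^ n * (-1) ^ k := by
  rw [← pow_sub_mul_pow (-1 : R) h, mul_assoc, neg_one_pow_mul_self, mul_one]

section AlternatingBinomialSums

variable {R : Type*} [CommRing R]

lemma sum_range_neg_one_pow_mul_choose_mul_add_pow_eq_zero {n r : ℕ} (hr : r < n) (y : R) :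
    ∑ i ∈ range (n + 1), (-1) ^ i * n.choose i * (y + i) ^ r = 0 := by
  have h := congrFun (fwdDiff_iter_pow_eq_zero_of_lt (R := R) hr) y
  rw [fwdDiff_iter_eq_sum_shift, Pi.zero_apply] at h
  calc _ = (-1) ^ n *
        ∑ i ∈ range (n + 1), ((-1 : ℤ) ^ (n - i) * n.choose i) • (y + i • 1) ^ r := by
        rw [mul_sum]
        refine sum_congr rfl fun i hi => ?_
        rw [neg_one_pow_tsub (Nat.le_of_lt_succ (mem_range.mp hi)), nsmul_one, zsmul_eq_mul]
        push_cast
        linear_combination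
          -(-1 : R) ^ i * n.choose i * (y + i) ^ r * neg_one_pow_mul_self (R := R) n
    _ = 0 := by rw [h, mul_zero]

lemma sum_range_two_mul_add_one {M : Type*} [AddCommMonoid M] (m : ℕ) (h : ℕ → M) :
    ∑ i ∈ range (2 * m + 1), h i = h m + ∑ k ∈ Icc 1 m, (h (m + k) + h (m - k)) := by
  rw [show 2 * m + 1 = m + 1 + m by ring, sum_range_add, sum_range_succ, sum_add_distrib,
    ← Ico_add_one_right_eq_Icc,
    sum_Ico_eq_sum_range, sum_Ico_eq_sum_range, Nat.add_sub_cancel, ← sum_range_reflect]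
  simp only [Nat.sub_sub, add_assoc, add_comm 1]
  abel

lemma sum_range_neg_one_pow_mul_choose_mul_of_even (m : ℕ) (φ : R → R)
    (hφ : ∀ x, φ (-x) = φ x) :
    ∑ i ∈ range (2 * m + 1), (-1) ^ i * (2 * m).choose i * φ (i - m) =
      (-1) ^ m * ((2 * m).choose m * φ 0 +
        2 * ∑ k ∈ Icc 1 m, (-1) ^ k * (2 * m).choose (m - k) * φ k) := by
  rw [sum_range_two_mul_add_one, sub_self, mul_add, mul_sum, mul_sum, ← mul_assoc]
  congr 1
  refine sum_congr rfl fun k hk => ?_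
  have hkm := (mem_Icc.mp hk).2
  have hchoose : (2 * m).choose (m + k) = (2 * m).choose (m - k) := by
    rw [← Nat.choose_symm (by omega)]; congr 1; omega
  rw [hchoose, Nat.cast_sub hkm, Nat.cast_add, pow_add, neg_one_pow_tsub hkm, add_sub_cancel_left,
    sub_sub_cancel_left, hφ]
  ring

lemma two_mul_sum_Icc_neg_one_pow_mul_choose_mul_pow {m j : ℕ} (hj : j < m) :
    2 * ∑ k ∈ Icc 1 m, (-1) ^ k * (2 * m).choose (m - k) * (k : R) ^ (2 * j) =
      -((2 * m).choose m * 0 ^ (2 * j)) := by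
  have h := sum_range_neg_one_pow_mul_choose_mul_of_even m (fun x : R => x ^ (2 * j))
    (fun x => Even.neg_pow (even_two_mul j) x)
  simp only [sub_eq_neg_add] at h
  rw [sum_range_neg_one_pow_mul_choose_mul_add_pow_eq_zero (by omega)] at h
  linear_combination ((isUnit_neg_one.pow m).mul_right_eq_zero.mp h.symm)

lemma two_mul_sum_range_mul_sum_Icc_neg_one_pow_mul_choose_mul_pow {m q : ℕ} (hq : 1 ≤ q)
    (hqm : q ≤ m) (c : ℕ → R) :
    2 * ∑ j ∈ range q,
        c j * ∑ k ∈ Icc 1 m, (-1) ^ k * (2 * m).choose (m - k) * (k : R) ^ (2 * j) =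
      -((2 * m).choose m * c 0) := by
  have hconst : ∑ j ∈ range q, c j * 0 ^ (2 * j) = c 0 := by
    rw [sum_eq_single_of_mem (f := fun j => c j * (0 : R) ^ (2 * j)) 0 (mem_range.mpr hq)
      fun j _ hj => by simp [hj]]
    simp
  calc _ = ∑ j ∈ range q, c j *
        (2 * ∑ k ∈ Icc 1 m, (-1) ^ k * (2 * m).choose (m - k) * (k : R) ^ (2 * j)) := by
        rw [mul_sum]; exact sum_congr rfl fun _ _ => by ring
    _ = ∑ j ∈ range q, c j * -((2 * m).choose m * 0 ^ (2 * j)) := sum_congr rfl fun j hj => by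
        rw [two_mul_sum_Icc_neg_one_pow_mul_choose_mul_pow ((mem_range.mp hj).trans_le hqm)]
    _ = -((2 * m).choose m * ∑ j ∈ range q, c j * 0 ^ (2 * j)) := by
        rw [mul_sum, ← sum_neg_distrib]; exact sum_congr rfl fun _ _ => by ring
    _ = _ := by rw [hconst]

end AlternatingBinomialSums

open Complex in
lemma sum_range_neg_one_pow_mul_choose_mul_cos (m : ℕ) (t : ℝ) :
    ∑ i ∈ range (2 * m + 1), (-1) ^ i * (2 * m).choose i * Real.cos (2 * (i - m) * t) =
      (-4) ^ m * Real.sin t ^ (2 * m) := by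
  have hsin : (Real.sin t : ℂ) * 2 * I = exp (t * I) - exp (-t * I) := by
    rw [ofReal_sin, ← cos_add_sin_I, ← cos_sub_sin_I]; ring
  have hpow :
      ((Real.sin t : ℂ) * 2 * I) ^ (2 * m) = (((-4) ^ m * Real.sin t ^ (2 * m) : ℝ) : ℂ) := by
    rw [pow_mul, mul_pow, mul_pow, I_sq]; push_cast; rw [neg_pow (4 : ℂ)]; ring
  have hterm : ∀ i ∈ range (2 * m + 1),
      (-1) ^ (i + 2 * m) * exp (t * I) ^ i * exp (-t * I) ^ (2 * m - i) * (2 * m).choose i =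
        (((-1) ^ i * (2 * m).choose i : ℝ) : ℂ) * exp ((2 * (i - m) * t : ℝ) * I) := by
    intro i hi
    have hi := Nat.le_of_lt_succ (mem_range.mp hi)
    have hexp :
        exp (t * I) ^ i * exp (-t * I) ^ (2 * m - i) = exp ((2 * (i - m) * t : ℝ) * I) := by
      rw [← Complex.exp_nat_mul, ← Complex.exp_nat_mul, ← Complex.exp_add]
      push_cast [Nat.cast_sub hi]
      ring_nf
    rw [mul_assoc ((-1) ^ _), hexp, pow_add, pow_mul, neg_one_sq, one_pow]
    push_cast
    ring
  calc _ = (((Real.sin t : ℂ) * 2 * I) ^ (2 * m)).re := by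
        rw [hsin, sub_pow, re_sum]
        refine sum_congr rfl fun i hi => ?_
        rw [hterm i hi, re_ofReal_mul, exp_ofReal_mul_I_re]
    _ = _ := by rw [hpow, ofReal_re]

lemma four_pow_mul_sin_pow_two_mul (m : ℕ) (t : ℝ) :
    4 ^ m * Real.sin t ^ (2 * m) =
      (2 * m).choose m +
        2 * ∑ k ∈ Icc 1 m, (-1) ^ k * (2 * m).choose (m - k) * Real.cos (2 * k * t) := by
  have h := sum_range_neg_one_pow_mul_choose_mul_of_even m (fun x : ℝ => Real.cos (2 * x * t))
    (fun x => by rw [mul_neg, neg_mul, Real.cos_neg])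
  simp only [mul_zero, zero_mul, Real.cos_zero, mul_one] at h
  rw [sum_range_neg_one_pow_mul_choose_mul_cos, neg_pow, mul_assoc] at h
  exact mul_left_cancel₀ (pow_ne_zero m (by norm_num)) h

lemma neg_one_pow_mul_f_two_mul (q : ℕ) (x : ℝ) :
    (-1) ^ q * f (2 * q) x =
      Real.cos x - ∑ j ∈ range q, (-1) ^ j * x ^ (2 * j) / (2 * j).factorial := by
  rw [f, if_neg (by omega), Nat.mul_div_cancel_left q two_pos, ← mul_assoc, neg_one_pow_mul_self,
    one_mul]

theorem stmt_8 (m q : ℕ) (hq : 1 ≤ q) (hqm : q ≤ m) (t : ℝ) :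
    (Real.sin t) ^ (2 * m) =
      (1 / 2 ^ (2 * m - 1)) *
        ∑ k ∈ Finset.Icc 1 m,
          (Nat.choose (2 * m) (m - k) : ℝ) * (-1 : ℝ) ^ (k + q) * f (2 * q) (2 * k * t) := by
  set c : ℕ → ℝ := fun j => (-1) ^ j * (2 * t) ^ (2 * j) / (2 * j).factorial
  have hterm : ∀ k : ℕ,
      ((2 * m).choose (m - k) : ℝ) * (-1) ^ (k + q) * f (2 * q) (2 * k * t) =
      (-1) ^ k * (2 * m).choose (m - k) * Real.cos (2 * k * t) -
        ∑ j ∈ range q, c j * ((-1) ^ k * (2 * m).choose (m - k) * (k : ℝ) ^ (2 * j)) := by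
    intro k
    calc _ = (-1) ^ k * (2 * m).choose (m - k) * ((-1) ^ q * f (2 * q) (2 * k * t)) := by ring
      _ = _ := by
        rw [neg_one_pow_mul_f_two_mul, mul_sub, mul_sum]
        exact congrArg _ (sum_congr rfl fun j _ => by simp only [c]; ring)
  have hmoments := two_mul_sum_range_mul_sum_Icc_neg_one_pow_mul_choose_mul_pow hq hqm c
  have hcos := four_pow_mul_sin_pow_two_mul m t
  have hfour : (4 : ℝ) ^ m = 2 * 2 ^ (2 * m - 1) := by
    rw [← pow_succ', Nat.sub_add_cancel (by omega), pow_mul]; norm_num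
  rw [sum_congr rfl fun k _ => hterm k, sum_sub_distrib, sum_comm]
  simp only [← mul_sum]
  rw [one_div_mul_eq_div, eq_div_iff (by positivity)]
  linear_combination (hcos + hmoments - Real.sin t ^ (2 * m) * hfour) / 2
end

section
/- For all integers m, q with 0 ≤ q ≤ m and all real t, (sin t)^{2m+1} = (1/2^{2m}) Σ_{k=0}^m C(2m+1, m−k) (−1)^{k+q} f_{2q+1}((2k+1)t). -/
open Real MeasureTheory Filter Finset

lemma negOnePar {R : Type*} [Monoid R] [HasDistribNeg R] {a b : ℕ} (h : a % 2 = b % 2) :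
    (-1 : R) ^ a = (-1) ^ b := by
  rw [← Nat.div_add_mod a 2, ← Nat.div_add_mod b 2, h, pow_add, pow_add, pow_mul, pow_mul,
    neg_one_sq, one_pow, one_pow]

lemma splitSum {M : Type*} [AddCommMonoid M] (m : ℕ) (g : ℕ → M) :
    ∑ i ∈ Finset.range (2 * m + 2), g i
      = ∑ k ∈ Finset.range (m + 1), (g (m - k) + g (m + 1 + k)) := by
  have h : 2 * m + 2 = (m + 1) + (m + 1) := by ring
  rw [h, Finset.sum_range_add, Finset.sum_add_distrib]
  congr 1
  exact (Finset.sum_range_reflect g (m+1)).symm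

lemma altSumPow : ∀ n : ℕ, ∀ d < n, ∑ i ∈ Finset.range (n + 1),
    (-1 : ℝ) ^ i * ((n.choose i : ℕ) : ℝ) * (i : ℝ) ^ d = 0 := by
  intro n
  induction n with
  | zero => intro d hd; omega
  | succ n IH =>
    intro d hd
    cases d with
    | zero =>
      have h := Int.alternating_sum_range_choose_of_ne (n := n + 1) (by omega)
      have h2 : ∑ i ∈ Finset.range (n + 1 + 1), (-1:ℝ)^i * (((n+1).choose i : ℕ) : ℝ) = 0 := by
        exact_mod_cast h
      simpa using h2
    | succ e =>
      have he : e < n := by omega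
      rw [Finset.sum_range_succ']
      have h0 : (-1 : ℝ) ^ 0 * (((n+1).choose 0 : ℕ) : ℝ) * ((0:ℕ) : ℝ) ^ (e+1) = 0 := by simp
      rw [h0, add_zero]
      have hterm : ∀ i : ℕ, (-1 : ℝ) ^ (i+1) * (((n+1).choose (i+1) : ℕ) : ℝ) * ((i+1:ℕ) : ℝ) ^ (e+1)
          = (-(n+1 : ℝ)) * ∑ j ∈ Finset.range (e+1),
              ((e.choose j : ℕ) : ℝ) * ((-1:ℝ)^i * ((n.choose i : ℕ):ℝ) * (i:ℝ)^j) := by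
        intro i
        have hc : ((n+1).choose (i+1)) * (i+1) = (n+1) * (n.choose i) := by
          rw [← Nat.add_one_mul_choose_eq]
        have hcast : (((n+1).choose (i+1) : ℕ) : ℝ) * ((i:ℝ)+1) = ((n:ℝ)+1) * ((n.choose i : ℕ) : ℝ) := by
          exact_mod_cast congrArg (Nat.cast : ℕ → ℝ) hc
        have hbin : ((i : ℝ) + 1) ^ e = ∑ j ∈ Finset.range (e+1),
            (i:ℝ)^j * 1^(e-j) * ((e.choose j : ℕ) : ℝ) := add_pow _ _ _
        calc (-1 : ℝ) ^ (i+1) * (((n+1).choose (i+1) : ℕ) : ℝ) * ((i+1:ℕ) : ℝ) ^ (e+1)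
            = (-1:ℝ)^(i+1) * ((((n+1).choose (i+1) : ℕ) : ℝ) * ((i:ℝ)+1)) * ((i:ℝ)+1)^e := by
              push_cast; ring
          _ = (-1:ℝ)^(i+1) * (((n:ℝ)+1) * ((n.choose i : ℕ) : ℝ)) *
                ∑ j ∈ Finset.range (e+1), (i:ℝ)^j * 1^(e-j) * ((e.choose j : ℕ) : ℝ) := by
              rw [hcast, hbin]
          _ = _ := by
              rw [Finset.mul_sum, Finset.mul_sum]
              exact Finset.sum_congr rfl fun j _ => by rw [pow_succ]; ring
      calc ∑ i ∈ Finset.range (n+1),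
              (-1 : ℝ) ^ (i+1) * (((n+1).choose (i+1) : ℕ) : ℝ) * ((i+1:ℕ) : ℝ) ^ (e+1)
          = ∑ i ∈ Finset.range (n+1), (-(n+1 : ℝ)) * ∑ j ∈ Finset.range (e+1),
              ((e.choose j : ℕ) : ℝ) * ((-1:ℝ)^i * ((n.choose i : ℕ):ℝ) * (i:ℝ)^j) :=
            Finset.sum_congr rfl fun i _ => hterm i
        _ = (-(n+1 : ℝ)) * ∑ i ∈ Finset.range (n+1), ∑ j ∈ Finset.range (e+1),
              ((e.choose j : ℕ) : ℝ) * ((-1:ℝ)^i * ((n.choose i : ℕ):ℝ) * (i:ℝ)^j) := by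
            rw [Finset.mul_sum]
        _ = (-(n+1 : ℝ)) * ∑ j ∈ Finset.range (e+1), ∑ i ∈ Finset.range (n+1),
              ((e.choose j : ℕ) : ℝ) * ((-1:ℝ)^i * ((n.choose i : ℕ):ℝ) * (i:ℝ)^j) := by
            rw [Finset.sum_comm]
        _ = 0 := by
            rw [Finset.sum_eq_zero, mul_zero]
            intro j hj
            rw [← Finset.mul_sum, IH j (lt_of_le_of_lt (Nat.lt_succ_iff.mp (mem_range.mp hj)) he), mul_zero]

lemma Tzero (m j : ℕ) (hj : j < m) :
    ∑ i ∈ Finset.range (2*m + 2),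
      (-1:ℝ)^i * (((2*m+1).choose i : ℕ) : ℝ) * ((2*(m:ℝ)+1) - 2*(i:ℝ))^(2*j+1) = 0 := by
  have hsub : ∀ i : ℕ, ((2*(m:ℝ)+1) - 2*(i:ℝ))^(2*j+1)
      = ∑ r ∈ Finset.range (2*j+2), (-1:ℝ)^(r+(2*j+1)) * (2*(m:ℝ)+1)^r * (2*(i:ℝ))^(2*j+1-r)
          * (((2*j+1).choose r : ℕ) : ℝ) := fun i => sub_pow _ _ _
  calc ∑ i ∈ Finset.range (2*m + 2),
        (-1:ℝ)^i * (((2*m+1).choose i : ℕ) : ℝ) * ((2*(m:ℝ)+1) - 2*(i:ℝ))^(2*j+1)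
      = ∑ i ∈ Finset.range (2*m + 2), ∑ r ∈ Finset.range (2*j+2),
          ((-1:ℝ)^(r+(2*j+1)) * (2*(m:ℝ)+1)^r * 2^(2*j+1-r) * (((2*j+1).choose r : ℕ) : ℝ))
            * ((-1:ℝ)^i * (((2*m+1).choose i : ℕ) : ℝ) * (i:ℝ)^(2*j+1-r)) := by
        refine Finset.sum_congr rfl fun i _ => ?_
        rw [hsub i, Finset.mul_sum]
        refine Finset.sum_congr rfl fun r _ => ?_
        rw [mul_pow]
        ring
    _ = ∑ r ∈ Finset.range (2*j+2),
          ((-1:ℝ)^(r+(2*j+1)) * (2*(m:ℝ)+1)^r * 2^(2*j+1-r) * (((2*j+1).choose r : ℕ) : ℝ))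
            * ∑ i ∈ Finset.range (2*m + 2),
              ((-1:ℝ)^i * (((2*m+1).choose i : ℕ) : ℝ) * (i:ℝ)^(2*j+1-r)) := by
        rw [Finset.sum_comm]
        exact Finset.sum_congr rfl fun r _ => (Finset.mul_sum _ _ _).symm
    _ = 0 := by
        refine Finset.sum_eq_zero fun r _ => ?_
        have h := altSumPow (2*m+1) (2*j+1-r) (by omega)
        rw [show 2*m+1+1 = 2*m+2 by omega] at h
        rw [h, mul_zero]

lemma Bzero (m j : ℕ) (hj : j < m) :
    ∑ k ∈ Finset.range (m + 1),
      (((2*m+1).choose (m-k) : ℕ) : ℝ) * (-1:ℝ)^k * (2*(k:ℝ)+1)^(2*j+1) = 0 := by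
  have hT := Tzero m j hj
  rw [splitSum m (fun i => (-1:ℝ)^i * (((2*m+1).choose i : ℕ) : ℝ) * ((2*(m:ℝ)+1) - 2*(i:ℝ))^(2*j+1))] at hT
  have key : ∀ k ∈ Finset.range (m+1),
      ((-1:ℝ)^(m-k) * (((2*m+1).choose (m-k) : ℕ) : ℝ) * ((2*(m:ℝ)+1) - 2*(((m-k : ℕ)):ℝ))^(2*j+1)
        + (-1:ℝ)^(m+1+k) * (((2*m+1).choose (m+1+k) : ℕ) : ℝ) * ((2*(m:ℝ)+1) - 2*(((m+1+k : ℕ)):ℝ))^(2*j+1))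
      = (2*(-1:ℝ)^m) * ((((2*m+1).choose (m-k) : ℕ) : ℝ) * (-1:ℝ)^k * (2*(k:ℝ)+1)^(2*j+1)) := by
    intro k hk
    have hkm : k ≤ m := Nat.lt_succ_iff.mp (mem_range.mp hk)
    have hc1 : ((m - k : ℕ) : ℝ) = (m:ℝ) - (k:ℝ) := by
      push_cast [hkm]; ring
    have hchoose : (2*m+1).choose (m+1+k) = (2*m+1).choose (m-k) := by
      rw [show m - k = 2*m+1 - (m+1+k) by omega]
      exact (Nat.choose_symm (by omega)).symm
    have hs1 : (-1:ℝ)^(m-k) = (-1:ℝ)^m * (-1:ℝ)^k := by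
      rw [← pow_add]; exact negOnePar (by omega)
    have hs2 : (-1:ℝ)^(m+1+k) = -((-1:ℝ)^m * (-1:ℝ)^k) := by
      have : (-1:ℝ)^(m+1+k) = (-1:ℝ)^(m+k+1) := negOnePar (by omega)
      rw [this, pow_succ, pow_add]; ring
    have he1 : ((2*(m:ℝ)+1) - 2*(((m-k : ℕ)):ℝ)) = 2*(k:ℝ)+1 := by rw [hc1]; ring
    have he2 : ((2*(m:ℝ)+1) - 2*(((m+1+k : ℕ)):ℝ)) = -(2*(k:ℝ)+1) := by push_cast; ring
    have hodd : (-(2*(k:ℝ)+1))^(2*j+1) = -((2*(k:ℝ)+1)^(2*j+1)) := Odd.neg_pow ⟨j, by ring⟩ _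
    rw [hchoose, hs1, hs2, he1, he2, hodd]
    ring
  rw [Finset.sum_congr rfl key, ← Finset.mul_sum] at hT
  have h2 : (2*(-1:ℝ)^m) ≠ 0 := by
    apply mul_ne_zero two_ne_zero
    exact pow_ne_zero _ (by norm_num)
  exact (mul_eq_zero.mp hT).resolve_left h2

lemma sinPowC (m : ℕ) (z : ℂ) :
    Complex.sin z ^ (2*m+1) = (1/2^(2*m)) * ∑ k ∈ Finset.range (m+1),
      (((2*m+1).choose (m-k) : ℕ) : ℂ) * (-1:ℂ)^k * Complex.sin ((2*(k:ℂ)+1) * z) := by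
  set u : ℂ := Complex.exp (z * Complex.I) with hu_def
  have hu : u ≠ 0 := Complex.exp_ne_zero _
  have hsin : ∀ n : ℕ, Complex.sin ((n:ℂ) * z) = ((u⁻¹)^n - u^n) * Complex.I / 2 := by
    intro n
    rw [Complex.sin]
    have h1 : -((n:ℂ)*z)*Complex.I = (n:ℕ) * (-(z*Complex.I)) := by push_cast; ring
    have h2 : ((n:ℂ)*z)*Complex.I = (n:ℕ) * (z*Complex.I) := by push_cast; ring
    rw [h1, h2, Complex.exp_nat_mul, Complex.exp_nat_mul, Complex.exp_neg, hu_def, inv_pow]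
  have hz : Complex.sin z = (u⁻¹ - u) * (Complex.I / 2) := by
    have := hsin 1
    simpa [mul_div_assoc] using this
  have hAA : (-1:ℂ)^m * (-1:ℂ)^m = 1 := by
    rw [← pow_add, negOnePar (R := ℂ) (b := 0) (by omega), pow_zero]
  calc Complex.sin z ^ (2*m+1)
      = (u⁻¹ - u)^(2*m+1) * (Complex.I/2)^(2*m+1) := by rw [hz, mul_pow]
    _ = (∑ i ∈ Finset.range (2*m+1+1),
          (-1:ℂ)^(i+(2*m+1)) * (u⁻¹)^i * u^(2*m+1-i) * (((2*m+1).choose i : ℕ) : ℂ))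
            * (Complex.I/2)^(2*m+1) := by rw [sub_pow]
    _ = (∑ k ∈ Finset.range (m+1),
          (((-1:ℂ)^((m-k)+(2*m+1)) * (u⁻¹)^(m-k) * u^(2*m+1-(m-k)) * (((2*m+1).choose (m-k) : ℕ) : ℂ))
           + ((-1:ℂ)^((m+1+k)+(2*m+1)) * (u⁻¹)^(m+1+k) * u^(2*m+1-(m+1+k)) * (((2*m+1).choose (m+1+k) : ℕ) : ℂ))))
            * (Complex.I/2)^(2*m+1) := by
        rw [show 2*m+1+1 = 2*m+2 from rfl,
          splitSum m (fun i => (-1:ℂ)^(i+(2*m+1)) * (u⁻¹)^i * u^(2*m+1-i) * (((2*m+1).choose i : ℕ) : ℂ))]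
    _ = ∑ k ∈ Finset.range (m+1),
          (((-1:ℂ)^((m-k)+(2*m+1)) * (u⁻¹)^(m-k) * u^(2*m+1-(m-k)) * (((2*m+1).choose (m-k) : ℕ) : ℂ))
           + ((-1:ℂ)^((m+1+k)+(2*m+1)) * (u⁻¹)^(m+1+k) * u^(2*m+1-(m+1+k)) * (((2*m+1).choose (m+1+k) : ℕ) : ℂ)))
            * (Complex.I/2)^(2*m+1) := Finset.sum_mul _ _ _
    _ = ∑ k ∈ Finset.range (m+1), (1/2^(2*m)) *
          ((((2*m+1).choose (m-k) : ℕ) : ℂ) * (-1:ℂ)^k * Complex.sin ((2*(k:ℂ)+1) * z)) := by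
        refine Finset.sum_congr rfl fun k hk => ?_
        have hkm : k ≤ m := Nat.lt_succ_iff.mp (mem_range.mp hk)
        have hA : (u⁻¹)^(m-k) * u^(2*m+1-(m-k)) = u^(2*k+1) := by
          rw [show 2*m+1-(m-k) = (m-k)+(2*k+1) by omega, pow_add, ← mul_assoc, inv_pow,
            inv_mul_cancel₀ (pow_ne_zero _ hu), one_mul]
        have hB : (u⁻¹)^(m+1+k) * u^(2*m+1-(m+1+k)) = (u⁻¹)^(2*k+1) := by
          rw [show 2*m+1-(m+1+k) = m-k by omega, show m+1+k = (2*k+1)+(m-k) by omega,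
            pow_add, mul_assoc, inv_pow u (m-k), inv_mul_cancel₀ (pow_ne_zero _ hu), mul_one]
        have hs1 : (-1:ℂ)^((m-k)+(2*m+1)) = -((-1:ℂ)^m * (-1:ℂ)^k) := by
          rw [negOnePar (R := ℂ) (b := m+k+1) (by omega), pow_succ, pow_add]; ring
        have hs2 : (-1:ℂ)^((m+1+k)+(2*m+1)) = (-1:ℂ)^m * (-1:ℂ)^k := by
          rw [negOnePar (R := ℂ) (b := m+k) (by omega), pow_add]
        have hchoose : (2*m+1).choose (m+1+k) = (2*m+1).choose (m-k) := by
          rw [show m - k = 2*m+1 - (m+1+k) by omega]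
          exact (Nat.choose_symm (by omega)).symm
        have hI : (Complex.I/2)^(2*m+1) = (-1:ℂ)^m * Complex.I / 2^(2*m+1) := by
          rw [div_pow, pow_succ, pow_mul, Complex.I_sq]
        have hsin' : Complex.sin ((2*(k:ℂ)+1)*z) = ((u⁻¹)^(2*k+1) - u^(2*k+1)) * Complex.I / 2 := by
          have h := hsin (2*k+1)
          rw [show ((2*k+1 : ℕ):ℂ) = 2*(k:ℂ)+1 by push_cast; ring] at h
          exact h
        rw [hs1, hs2, hchoose, hsin', hI,
          mul_assoc (-((-1:ℂ)^m * (-1:ℂ)^k)), hA,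
          mul_assoc ((-1:ℂ)^m * (-1:ℂ)^k), hB]
        linear_combination ((-1:ℂ)^k * (((2*m+1).choose (m-k):ℕ):ℂ) *
          (((u⁻¹)^(2*k+1) - u^(2*k+1)) * Complex.I) / 2^(2*m+1)) * hAA
    _ = (1/2^(2*m)) * ∑ k ∈ Finset.range (m+1),
          (((2*m+1).choose (m-k) : ℕ) : ℂ) * (-1:ℂ)^k * Complex.sin ((2*(k:ℂ)+1) * z) :=
        (Finset.mul_sum _ _ _).symm

lemma realSinPow (m : ℕ) (t : ℝ) :
    Real.sin t ^ (2*m+1) = (1/2^(2*m)) * ∑ k ∈ Finset.range (m+1),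
      (((2*m+1).choose (m-k) : ℕ) : ℝ) * (-1:ℝ)^k * Real.sin ((2*(k:ℝ)+1) * t) := by
  have h := sinPowC m (t : ℂ)
  apply Complex.ofReal_injective
  push_cast [Complex.ofReal_sin]
  convert h using 3

lemma f_odd (q : ℕ) (s : ℝ) : f (2*q+1) s
    = (-1:ℝ)^q * (Real.sin s -
        ∑ j ∈ Finset.range q, (-1:ℝ)^j * s^(2*j+1) / (Nat.factorial (2*j+1))) := by
  have hmod : (2*q+1) % 2 = 1 := by omega
  have hdiv : (2*q+1) / 2 = q := by omega
  rw [f, if_pos hmod, hdiv]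

theorem stmt_9 (m q : ℕ) (hqm : q ≤ m) (t : ℝ) :
    (Real.sin t) ^ (2 * m + 1) =
      (1 / 2 ^ (2 * m)) *
        ∑ k ∈ Finset.range (m + 1),
          (Nat.choose (2 * m + 1) (m - k) : ℝ) * (-1 : ℝ) ^ (k + q) * f (2 * q + 1) ((2 * k + 1) * t) := by
  have hsq : ∀ k : ℕ, (-1:ℝ)^(k+q) * (-1:ℝ)^q = (-1:ℝ)^k := fun k => by
    rw [← pow_add]; exact negOnePar (by omega)
  have step1 : ∀ k : ℕ,
      ((2*m+1).choose (m-k) : ℝ) * (-1:ℝ)^(k+q) * f (2*q+1) ((2*(k:ℝ)+1)*t)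
      = ((2*m+1).choose (m-k) : ℝ) * (-1:ℝ)^k * Real.sin ((2*(k:ℝ)+1)*t)
        - ∑ j ∈ Finset.range q, ((-1:ℝ)^j * t^(2*j+1) / (Nat.factorial (2*j+1)))
            * (((2*m+1).choose (m-k) : ℝ) * (-1:ℝ)^k * (2*(k:ℝ)+1)^(2*j+1)) := by
    intro k
    rw [f_odd]
    have h1 : ((2*m+1).choose (m-k) : ℝ) * (-1:ℝ)^(k+q) *
        ((-1:ℝ)^q * (Real.sin ((2*(k:ℝ)+1)*t) -
          ∑ j ∈ Finset.range q, (-1:ℝ)^j * ((2*(k:ℝ)+1)*t)^(2*j+1) / (Nat.factorial (2*j+1))))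
        = ((2*m+1).choose (m-k) : ℝ) * (-1:ℝ)^k * Real.sin ((2*(k:ℝ)+1)*t)
          - ((2*m+1).choose (m-k) : ℝ) * (-1:ℝ)^k *
            ∑ j ∈ Finset.range q, (-1:ℝ)^j * ((2*(k:ℝ)+1)*t)^(2*j+1) / (Nat.factorial (2*j+1)) := by
      linear_combination (((2*m+1).choose (m-k) : ℝ) * (Real.sin ((2*(k:ℝ)+1)*t) -
          ∑ j ∈ Finset.range q, (-1:ℝ)^j * ((2*(k:ℝ)+1)*t)^(2*j+1) / (Nat.factorial (2*j+1)))) * hsq k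
    rw [h1]
    congr 1
    rw [Finset.mul_sum]
    refine Finset.sum_congr rfl fun j _ => ?_
    rw [mul_pow]
    ring
  calc Real.sin t ^ (2*m+1)
      = (1/2^(2*m)) * ∑ k ∈ Finset.range (m+1),
          ((2*m+1).choose (m-k) : ℝ) * (-1:ℝ)^k * Real.sin ((2*(k:ℝ)+1) * t) := realSinPow m t
    _ = (1/2^(2*m)) * ∑ k ∈ Finset.range (m+1),
          (((2*m+1).choose (m-k) : ℝ) * (-1:ℝ)^k * Real.sin ((2*(k:ℝ)+1)*t)
            - ∑ j ∈ Finset.range q, ((-1:ℝ)^j * t^(2*j+1) / (Nat.factorial (2*j+1)))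
                * (((2*m+1).choose (m-k) : ℝ) * (-1:ℝ)^k * (2*(k:ℝ)+1)^(2*j+1))) := by
        congr 1
        rw [Finset.sum_sub_distrib]
        have hz : ∑ k ∈ Finset.range (m+1), ∑ j ∈ Finset.range q,
            ((-1:ℝ)^j * t^(2*j+1) / (Nat.factorial (2*j+1)))
              * (((2*m+1).choose (m-k) : ℝ) * (-1:ℝ)^k * (2*(k:ℝ)+1)^(2*j+1)) = 0 := by
          rw [Finset.sum_comm]
          refine Finset.sum_eq_zero fun j hj => ?_
          have hjm : j < m := lt_of_lt_of_le (mem_range.mp hj) hqm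
          rw [← Finset.mul_sum, Bzero m j hjm, mul_zero]
        rw [hz, sub_zero]
    _ = (1/2^(2*m)) * ∑ k ∈ Finset.range (m+1),
          ((2*m+1).choose (m-k) : ℝ) * (-1:ℝ)^(k+q) * f (2*q+1) ((2*(k:ℝ)+1)*t) := by
        congr 1
        exact Finset.sum_congr rfl fun k _ => (step1 k).symm
end

section
/- For integers m, q with 2 ≤ q ≤ m, ∫₀^∞ (sin t)^{2m}/t^{2q−1} dt = (1/2^{2m−1}) Σ_{k=1}^m (−1)^{k+q} C(2m, m−k) ((2k)^{2q−2}/(2q−2)!) ln k. -/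
open Real Filter Finset MeasureTheory intervalIntegral Topology
open scoped Nat

/-!
Binomially, `sin t ^ (2m) = ∑ᵢ γᵢ cos (βᵢ t)` with `γᵢ = (-1)^(i+m) C(2m,i) / 4^m` and
`βᵢ = 2i - 2m`. The moments `∑ᵢ γᵢ βᵢ^j` are `2m`-th finite differences of polynomials of degree
`j`, so they vanish for `j < 2m`. Hence this cosine sum `g` and its first `2p = 2q - 2` derivatives
vanish at `0`, and `2p` integrations by parts on `[0, X]` reduce the integral to
`(2p)!⁻¹ ∫₀^X g⁽²ᵖ⁾(t) / t dt`. The coefficients of `g⁽²ᵖ⁾ = (-1)^p ∑ᵢ γᵢ βᵢ^(2p) cos (βᵢ t)` sum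
to zero, so this is a combination of the Frullani integrals
`∫₀^∞ (cos (b t) - cos t) / t dt = -log |b|`. In `log |βᵢ| = log 2 + log |i - m|` the `log 2`
drops out by the same moment identity, and pairing `i = m ± k` gives the stated sum.
-/

section Frullani

open Set

theorem intervalIntegrable_div_of_differentiable {g : ℝ → ℝ} (hg : Differentiable ℝ g)
    (hg0 : g 0 = 0) (a b : ℝ) : IntervalIntegrable (fun t => g t / t) volume a b := by
  have hcont : Continuous (dslope g 0) := continuous_iff_continuousAt.2 fun t => by
    rcases eq_or_ne t 0 with rfl | ht
    · exact continuousAt_dslope_same.2 (hg 0)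
    · exact (continuousAt_dslope_of_ne ht).2 (hg t).continuousAt
  refine (hcont.intervalIntegrable a b).congr_ae (ae_restrict_of_ae ?_)
  filter_upwards [Measure.ae_ne volume (0:ℝ)] with t ht
  rw [dslope_of_ne _ ht, slope_def_field, hg0, sub_zero, sub_zero]

theorem intervalIntegrable_cos_div {a b : ℝ} (ha : 0 < a) (hb : 0 < b) :
    IntervalIntegrable (fun u => cos u / u) volume a b :=
  (continuous_cos.continuousOn.div continuousOn_id fun _ hu =>
    (lt_min ha hb |>.trans_le hu.1).ne').intervalIntegrable

theorem integral_cos_div_eq {a b : ℝ} (ha : 0 < a) (hb : 0 < b) :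
    ∫ u in a..b, cos u / u = sin b / b - sin a / a + ∫ u in a..b, sin u / u ^ 2 := by
  have hne : ∀ x ∈ uIcc a b, x ≠ 0 := fun x hx => (lt_min ha hb |>.trans_le hx.1).ne'
  have := integral_mul_deriv_eq_deriv_mul (fun x hx => hasDerivAt_inv (hne x hx))
    (fun x _ => hasDerivAt_sin x)
    (continuousOn_pow 2 |>.inv₀ fun x hx => pow_ne_zero 2 (hne x hx)).neg.intervalIntegrable
    (continuous_cos.intervalIntegrable a b)
  simp only [inv_mul_eq_div, mul_comm _ (sin _)] at this
  rw [this]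
  simp only [mul_neg, intervalIntegral.integral_neg, ← div_eq_mul_inv, sub_neg_eq_add]

theorem exists_tendsto_integral_cos_div :
    ∃ L, Tendsto (fun Y => ∫ u in (1:ℝ)..Y, cos u / u) atTop (𝓝 L) := by
  have hint : IntegrableOn (fun u : ℝ => sin u / u ^ 2) (Ioi 1) := by
    refine Integrable.mono' (integrableOn_Ioi_rpow_of_lt (by norm_num : (-2:ℝ) < -1) one_pos)
      (continuous_sin.measurable.div (measurable_id.pow_const 2)).aestronglyMeasurable
      ((ae_restrict_iff' measurableSet_Ioi).2 (.of_forall fun u (hu : 1 < u) => ?_))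
    rw [rpow_neg (by linarith), rpow_two, norm_div, norm_pow, Real.norm_eq_abs, Real.norm_eq_abs,
      abs_of_pos (by linarith : 0 < u), ← one_div]
    exact div_le_div_of_nonneg_right (abs_sin_le_one u) (by positivity)
  have hsin : Tendsto (fun Y => sin Y / Y) atTop (𝓝 0) := by
    simpa only [div_eq_inv_mul] using tendsto_inv_atTop_zero.zero_mul_isBoundedUnder_le
      (isBoundedUnder_of ⟨1, fun Y => by simpa using abs_sin_le_one Y⟩)
  refine ⟨0 - sin 1 + ∫ u in Ioi 1, sin u / u ^ 2, ?_⟩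
  refine ((hsin.sub_const _).add
    (intervalIntegral_tendsto_integral_Ioi 1 hint tendsto_id)).congr' ?_
  filter_upwards [eventually_ge_atTop 1] with Y hY
  rw [integral_cos_div_eq one_pos (by linarith), div_one]
  rfl

theorem tendsto_integral_cos_div_mul {b : ℝ} (hb : 0 < b) :
    Tendsto (fun X => ∫ u in X..b * X, cos u / u) atTop (𝓝 0) := by
  obtain ⟨L, hL⟩ := exists_tendsto_integral_cos_div
  refine (sub_self L ▸ (hL.comp (tendsto_id.const_mul_atTop hb)).sub hL).congr' ?_
  filter_upwards [eventually_gt_atTop 0] with X hX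
  exact integral_interval_sub_left (intervalIntegrable_cos_div one_pos (by positivity))
    (intervalIntegrable_cos_div one_pos hX)

theorem tendsto_integral_cos_mul_sub_cos_div {b : ℝ} (hb : b ≠ 0) :
    Tendsto (fun X => ∫ t in 0..X, (cos (b * t) - cos t) / t) atTop (𝓝 (-log |b|)) := by
  have hcos (t : ℝ) : cos (b * t) = cos (|b| * t) := by
    rcases abs_choice b with h | h <;> simp [h]
  simp_rw [hcos]
  replace hb : 0 < |b| := abs_pos.2 hb
  generalize |b| = b at hb ⊢
  refine (zero_sub (log b) ▸ (tendsto_integral_cos_div_mul hb).sub_const (log b)).congr' ?_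
  filter_upwards [eventually_gt_atTop 0] with X hX
  have hint (c : ℝ) : IntervalIntegrable (fun t => (cos (c * t) - 1) / t) volume 0 X :=
    intervalIntegrable_div_of_differentiable (by fun_prop) (by simp) 0 X
  have hscale (c : ℝ) (hc : 0 < c) :
      ∫ t in 0..X, (cos (c * t) - 1) / t = ∫ u in 0..c * X, (cos u - 1) / u := by
    simpa [inv_mul_eq_div, mul_zero] using
      Frullani.integral_comp_mul_inv_smul (f := fun u => cos u - 1) (ε := 0) (r := X) hc.ne'
  have hne : ∀ u ∈ uIcc X (b * X), u ≠ 0 := fun u hu =>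
    (lt_min hX (by positivity) |>.trans_le hu.1).ne'
  calc (∫ u in X..b * X, cos u / u) - log b
      = ∫ u in X..b * X, (cos u - 1) / u := by
        have hlog : ∫ u in X..b * X, u⁻¹ = log b := by
          rw [integral_inv_of_pos hX (by positivity), mul_div_cancel_right₀ b hX.ne']
        rw [← hlog, ← integral_sub (intervalIntegrable_cos_div hX (by positivity))
          (intervalIntegrable_inv hne continuousOn_id)]
        refine integral_congr fun u _ => ?_
        simp only [sub_div, one_div]
    _ = (∫ t in 0..X, (cos (b * t) - 1) / t) - ∫ t in 0..X, (cos (1 * t) - 1) / t := by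
        rw [hscale b hb, hscale 1 one_pos, one_mul, integral_interval_sub_left]
        all_goals exact intervalIntegrable_div_of_differentiable (by fun_prop) (by simp) _ _
    _ = ∫ t in 0..X, (cos (b * t) - cos t) / t := by
        rw [← integral_sub (hint b) (hint 1)]
        refine integral_congr fun u _ => ?_
        simp only [one_mul]
        ring

theorem tendsto_integral_sum_mul_cos_div {ι : Type*} {s : Finset ι} {c β : ι → ℝ}
    (hc : ∑ i ∈ s, c i = 0) (hβ : ∀ i ∈ s, β i = 0 → c i = 0) :
    Tendsto (fun X => ∫ t in 0..X, (∑ i ∈ s, c i * cos (β i * t)) / t) atTop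
      (𝓝 (-∑ i ∈ s, c i * log |β i|)) := by
  have hsplit (t : ℝ) :
      (∑ i ∈ s, c i * cos (β i * t)) / t =
        ∑ i ∈ s, c i * ((cos (β i * t) - cos t) / t) := by
    simp only [mul_div_assoc', ← sum_div, mul_sub, sum_sub_distrib, ← sum_mul, hc, zero_mul,
      sub_zero]
  have hint (i : ι) (X : ℝ) :
      IntervalIntegrable (fun t => c i * ((cos (β i * t) - cos t) / t)) volume 0 X :=
    (intervalIntegrable_div_of_differentiable (by fun_prop) (by simp) 0 X).const_mul (c i)
  have hlim : Tendsto (fun X => ∑ i ∈ s, c i * ∫ t in 0..X, (cos (β i * t) - cos t) / t)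
      atTop (𝓝 (∑ i ∈ s, c i * -log |β i|)) := by
    refine tendsto_finsetSum _ fun i hi => ?_
    by_cases h : β i = 0
    · simp [hβ i hi h]
    · exact (tendsto_integral_cos_mul_sub_cos_div h).const_mul (c i)
  simp only [mul_neg, sum_neg_distrib] at hlim
  refine hlim.congr fun X => ?_
  simp only [hsplit, integral_finsetSum fun i _ => hint i X, intervalIntegral.integral_const_mul]

end Frullani

section IteratedIntegrationByParts

open Set

variable {F : ℕ → ℝ → ℝ}

theorem abs_le_div_factorial_mul_pow (hF : ∀ j t, HasDerivAt (F j) (F (j + 1) t) t) {n : ℕ}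
    (h0 : ∀ j < n, F j 0 = 0) {B : ℝ} (hB : ∀ t, 0 ≤ t → |F n t| ≤ B) {t : ℝ}
    (ht : 0 ≤ t) :
    |F 0 t| ≤ B / n ! * t ^ n := by
  induction n generalizing F t with
  | zero => simpa using hB t ht
  | succ n ih =>
    have h1 (u : ℝ) (hu : 0 ≤ u) : |F 1 u| ≤ B / n ! * u ^ n :=
      ih (F := fun j => F (j + 1)) (fun j => hF (j + 1)) (fun j hj => h0 (j + 1) (by omega))
        hB hu
    have hcont : Continuous (F 1) :=
      continuous_iff_continuousAt.2 fun u => (hF 1 u).continuousAt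
    rw [← sub_zero (F 0 t), ← h0 0 n.succ_pos,
      ← integral_eq_sub_of_hasDerivAt (fun u _ => hF 0 u) (hcont.intervalIntegrable 0 t)]
    calc ‖∫ u in 0..t, F 1 u‖ ≤ ∫ u in 0..t, B / n ! * u ^ n :=
          intervalIntegral.norm_integral_le_of_norm_le ht (.of_forall fun u hu => h1 u hu.1.le)
            ((by fun_prop : Continuous fun u : ℝ => B / n ! * u ^ n).intervalIntegrable 0 t)
      _ = B / (n + 1)! * t ^ (n + 1) := by
          rw [intervalIntegral.integral_const_mul, integral_pow, zero_pow n.succ_ne_zero, sub_zero,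
            Nat.factorial_succ]
          push_cast
          field_simp

theorem intervalIntegrable_div_pow_of_abs_le {f : ℝ → ℝ} (hf : Continuous f) {n : ℕ}
    {C X : ℝ}    (hfC : ∀ t, 0 ≤ t → |f t| ≤ C * t ^ n) (hX : 0 ≤ X) :
    IntervalIntegrable (fun t => f t / t ^ n) volume 0 X := by
  rw [intervalIntegrable_iff_integrableOn_Ioc_of_le hX]
  refine Measure.integrableOn_of_bounded (M := C) measure_Ioc_lt_top.ne
    (hf.measurable.div (continuous_pow n).measurable).aestronglyMeasurable ?_
  filter_upwards [ae_restrict_mem measurableSet_Ioc] with t ht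
  rw [Real.norm_eq_abs, abs_div, abs_of_pos (pow_pos ht.1 n), div_le_iff₀ (pow_pos ht.1 n)]
  exact hfC t ht.1.le

theorem integral_div_pow_add_two {f f' : ℝ → ℝ} (hf : ∀ t, HasDerivAt f (f' t) t)
    (hf' : Continuous f') {r : ℕ} {C C' X : ℝ}
    (hfC : ∀ t, 0 ≤ t → |f t| ≤ C * t ^ (r + 2))
    (hf'C : ∀ t, 0 ≤ t → |f' t| ≤ C' * t ^ (r + 1)) (hX : 0 ≤ X) :
    ∫ t in 0..X, f t / t ^ (r + 2) =
      ((∫ t in 0..X, f' t / t ^ (r + 1)) - f X / X ^ (r + 1)) / (r + 1) := by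
  have hcont : Continuous f := continuous_iff_continuousAt.2 fun t => (hf t).continuousAt
  have hI := intervalIntegrable_div_pow_of_abs_le hcont hfC hX
  have hI' := intervalIntegrable_div_pow_of_abs_le hf' hf'C hX
  have hderiv : ∀ t ∈ Ioo 0 X, HasDerivAt (fun t => f t / t ^ (r + 1))
      (f' t / t ^ (r + 1) - (r + 1) * (f t / t ^ (r + 2))) t := fun t ht => by
    refine ((hf t).fun_div (hasDerivAt_pow (r + 1) t) (pow_ne_zero _ ht.1.ne')).congr_deriv ?_
    have ht0 : t ≠ 0 := ht.1.ne'
    simp only [Nat.add_sub_cancel, Nat.cast_add, Nat.cast_one]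
    field_simp
    ring
  have hsmall (t : ℝ) (ht : 0 ≤ t) : |f t / t ^ (r + 1)| ≤ C * t := by
    rcases ht.eq_or_lt with rfl | ht
    · simp
    rw [abs_div, abs_of_pos (pow_pos ht _), div_le_iff₀ (pow_pos ht _)]
    exact (hfC t ht.le).trans_eq (by ring)
  have hcontOn : ContinuousOn (fun t => f t / t ^ (r + 1)) (Icc 0 X) := by
    intro t ht
    rcases ht.1.eq_or_lt with rfl | ht0
    · rw [ContinuousWithinAt, zero_pow r.succ_ne_zero, div_zero]
      refine squeeze_zero_norm' (eventually_nhdsWithin_of_forall fun t ht => hsmall t ht.1) ?_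
      exact ((continuous_const.mul continuous_id).tendsto' 0 0 (by simp)).mono_left
        nhdsWithin_le_nhds
    · exact (hcont.continuousAt.div (continuous_pow _).continuousAt
        (pow_ne_zero _ ht0.ne')).continuousWithinAt
  have := integral_eq_sub_of_hasDerivAt_of_le hX hcontOn hderiv (hI'.sub (hI.const_mul _))
  rw [integral_sub hI' (hI.const_mul _), intervalIntegral.integral_const_mul] at this
  rw [zero_pow r.succ_ne_zero, div_zero, sub_zero] at this
  field_simp
  linarith

theorem tendsto_integral_div_pow_of_hasDerivAt (hF : ∀ j t, HasDerivAt (F j) (F (j + 1) t) t)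
    {k : ℕ} (h0 : ∀ j ≤ k, F j 0 = 0) (hbdd : ∀ j, ∃ M, ∀ t, |F j t| ≤ M) {L : ℝ}
    (hL : Tendsto (fun X => ∫ t in 0..X, F k t / t) atTop (𝓝 L)) :
    Tendsto (fun X => ∫ t in 0..X, F 0 t / t ^ (k + 1)) atTop (𝓝 (L / k !)) := by
  induction k generalizing F with
  | zero => simpa using hL
  | succ k ih =>
    have h1 : Tendsto (fun X => ∫ t in 0..X, F 1 t / t ^ (k + 1)) atTop (𝓝 (L / k !)) :=
      ih (F := fun j => F (j + 1)) (fun j => hF (j + 1)) (fun j hj => h0 (j + 1) (by omega))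
        (fun j => hbdd (j + 1)) hL
    obtain ⟨B, hB⟩ := hbdd (k + 2)
    obtain ⟨M, hM⟩ := hbdd 0
    have hboundary : Tendsto (fun X => F 0 X / X ^ (k + 1)) atTop (𝓝 0) := by
      simpa only [div_eq_inv_mul, Pi.inv_apply] using Tendsto.zero_mul_isBoundedUnder_le (g := F 0)
        (tendsto_pow_atTop k.succ_ne_zero).inv_tendsto_atTop (isBoundedUnder_of ⟨M, hM⟩)
    have hfac : L / k ! / (k + 1) = L / (k + 1)! := by
      rw [Nat.factorial_succ, div_div]
      push_cast
      ring
    refine hfac ▸ sub_zero (L / k !) ▸ ((h1.sub hboundary).div_const ((k : ℝ) + 1)).congr' ?_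
    filter_upwards [eventually_ge_atTop 0] with X hX
    exact (integral_div_pow_add_two (hF 0)
      (continuous_iff_continuousAt.2 fun t => (hF 1 t).continuousAt)
      (fun t ht => abs_le_div_factorial_mul_pow hF (n := k + 2) (fun j hj => h0 j (by omega))
        (fun t _ => hB t) ht)
      (fun t ht => abs_le_div_factorial_mul_pow (F := fun j => F (j + 1)) (fun j => hF (j + 1))
        (n := k + 1) (fun j hj => h0 (j + 1) (by omega)) (fun t _ => hB t) ht) hX).symm

end IteratedIntegrationByParts

section CosineSums

variable {ι : Type*} (s : Finset ι) (γ β : ι → ℝ)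

-- The phase `j * (π / 2)` encodes `j` differentiations, since `cos (x + π / 2) = -sin x`.
noncomputable def cosSumDeriv (j : ℕ) (t : ℝ) : ℝ :=
  ∑ i ∈ s, γ i * β i ^ j * cos (β i * t + j * (π / 2))

theorem hasDerivAt_cosSumDeriv (j : ℕ) (t : ℝ) :
    HasDerivAt (cosSumDeriv s γ β j) (cosSumDeriv s γ β (j + 1) t) t := by
  unfold cosSumDeriv
  refine HasDerivAt.fun_sum fun i _ => ?_
  refine ((((hasDerivAt_id t).const_mul (β i)).add_const (j * (π / 2))).cos.const_mul
    (γ i * β i ^ j)).congr_deriv ?_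
  push_cast
  rw [add_mul, one_mul, ← add_assoc, cos_add_pi_div_two, id]
  ring

theorem abs_cosSumDeriv_le (j : ℕ) (t : ℝ) :
    |cosSumDeriv s γ β j t| ≤ ∑ i ∈ s, |γ i| * |β i| ^ j :=
  (abs_sum_le_sum_abs _ _).trans <| sum_le_sum fun i _ => by
    rw [abs_mul, abs_mul, abs_pow]
    exact mul_le_of_le_one_right (by positivity) (abs_cos_le_one _)

theorem cosSumDeriv_zero (t : ℝ) :
    cosSumDeriv s γ β 0 t = ∑ i ∈ s, γ i * cos (β i * t) := by
  simp [cosSumDeriv]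

theorem cosSumDeriv_two_mul (p : ℕ) (t : ℝ) :
    cosSumDeriv s γ β (2 * p) t =
      ∑ i ∈ s, (-1) ^ p * γ i * β i ^ (2 * p) * cos (β i * t) := by
  refine sum_congr rfl fun i _ => ?_
  rw [show ((2 * p : ℕ) : ℝ) * (π / 2) = p * π by push_cast; ring, cos_add_nat_mul_pi]
  ring

theorem cosSumDeriv_apply_zero_of_moments {p : ℕ}
    (hmom : ∀ r ≤ p, ∑ i ∈ s, γ i * β i ^ (2 * r) = 0) {j : ℕ} (hj : j ≤ 2 * p) :
    cosSumDeriv s γ β j 0 = 0 := by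
  have h : cosSumDeriv s γ β j 0 = cos (j * (π / 2)) * ∑ i ∈ s, γ i * β i ^ j := by
    simp [cosSumDeriv, mul_sum, mul_comm]
  rcases Nat.even_or_odd' j with ⟨r, rfl | rfl⟩
  · rw [h, hmom r (by omega), mul_zero]
  · rw [h, show ((2 * r + 1 : ℕ) : ℝ) * (π / 2) = π / 2 + r * π by push_cast; ring,
      cos_add_nat_mul_pi, cos_pi_div_two, mul_zero, zero_mul]

theorem tendsto_integral_sum_mul_cos_div_pow {p : ℕ} (hp : 1 ≤ p)
    (hmom : ∀ r ≤ p, ∑ i ∈ s, γ i * β i ^ (2 * r) = 0) :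
    Tendsto (fun X => ∫ t in 0..X, (∑ i ∈ s, γ i * cos (β i * t)) / t ^ (2 * p + 1)) atTop
      (𝓝 ((-∑ i ∈ s, (-1) ^ p * γ i * β i ^ (2 * p) * log |β i|) / (2 * p)!)) := by
  have hL := tendsto_integral_sum_mul_cos_div (s := s) (β := β)
    (c := fun i => (-1) ^ p * γ i * β i ^ (2 * p))
    (by simp_rw [mul_assoc, ← mul_sum, hmom p le_rfl, mul_zero])
    (fun i _ h => by simp [h, zero_pow (by omega : 2 * p ≠ 0)])
  simp_rw [← cosSumDeriv_two_mul, ← cosSumDeriv_zero] at hL ⊢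
  exact tendsto_integral_div_pow_of_hasDerivAt (hasDerivAt_cosSumDeriv s γ β)
    (fun j hj => cosSumDeriv_apply_zero_of_moments s γ β hmom hj)
    (fun j => ⟨_, abs_cosSumDeriv_le s γ β j⟩) hL

end CosineSums

theorem sin_pow_two_mul_eq_sum_cos (m : ℕ) (t : ℝ) :
    sin t ^ (2 * m) = ∑ i ∈ range (2 * m + 1),
      (-1) ^ (i + m) * (2 * m).choose i / 4 ^ m * cos ((2 * i - 2 * m : ℝ) * t) := by
  have hexp (i : ℕ) (hi : i ∈ range (2 * m + 1)) :
      Complex.exp (t * Complex.I) ^ i * Complex.exp (-(t * Complex.I)) ^ (2 * m - i) =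
        Complex.exp (((2 * i - 2 * m : ℝ) * t : ℝ) * Complex.I) := by
    rw [← Complex.exp_nat_mul, ← Complex.exp_nat_mul, ← Complex.exp_add]
    push_cast [Nat.cast_sub (Nat.lt_succ_iff.1 (mem_range.1 hi))]
    ring_nf
  have h2 : 2 * Complex.I * Complex.sin t =
      Complex.exp (t * Complex.I) - Complex.exp (-(t * Complex.I)) := by
    rw [mul_comm 2, mul_assoc, Complex.two_sin, neg_mul]
    ring_nf
    rw [Complex.I_sq]
    ring
  have h4 : (-4 : ℂ) ^ m ≠ 0 := pow_ne_zero _ (by norm_num)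
  have hC : ((sin t ^ (2 * m) : ℝ) : ℂ) =
      ∑ i ∈ range (2 * m + 1), ((-1) ^ (i + m) * (2 * m).choose i / 4 ^ m : ℝ) *
        Complex.exp (((2 * i - 2 * m : ℝ) * t : ℝ) * Complex.I) := by
    refine mul_right_cancel₀ h4 ?_
    calc ((sin t ^ (2 * m) : ℝ) : ℂ) * (-4) ^ m
        = (2 * Complex.I * Complex.sin t) ^ (2 * m) := by
          rw [mul_pow, pow_mul (2 * Complex.I), mul_pow, Complex.I_sq]
          push_cast
          ring
      _ = _ := by
          rw [h2, sub_pow, sum_mul]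
          refine sum_congr rfl fun i hi => ?_
          rw [mul_assoc _ (Complex.exp _ ^ i), hexp i hi, neg_pow (4 : ℂ)]
          push_cast
          field_simp
          ring
  simpa only [Complex.ofReal_re, Complex.re_sum, Complex.re_ofReal_mul,
    Complex.exp_ofReal_mul_I_re] using congrArg Complex.re hC

theorem sum_neg_one_pow_mul_choose_mul_eval_eq_zero {R : Type*} [CommRing R] {n : ℕ}
    {P : Polynomial R} (hP : P.natDegree < n) :
    ∑ i ∈ range (n + 1), (-1) ^ i * (n.choose i : R) * P.eval (i : R) = 0 := by
  have h := congrFun (Polynomial.fwdDiff_iter_eq_zero_of_degree_lt hP) 0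
  rw [fwdDiff_iter_eq_sum_shift, Pi.zero_apply] at h
  rw [← mul_eq_zero_of_right ((-1) ^ n) h, mul_sum]
  refine sum_congr rfl fun i hi => ?_
  have hi : i ≤ n := Nat.lt_succ_iff.1 (mem_range.1 hi)
  rw [zsmul_eq_mul, zero_add, nsmul_one]
  push_cast
  rw [← mul_assoc, ← mul_assoc, ← pow_add]
  congr 2
  exact neg_one_pow_congr (by simp only [Nat.even_iff]; omega)

theorem sum_choose_mul_pow_eq_zero (m : ℕ) {j : ℕ} (hj : j < 2 * m) :
    ∑ i ∈ range (2 * m + 1),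
      (-1) ^ (i + m) * (2 * m).choose i / 4 ^ m * (2 * i - 2 * m : ℝ) ^ j = 0 := by
  have hdeg : ((Polynomial.C 2 * Polynomial.X - Polynomial.C (2 * m : ℝ)) ^ j).natDegree
      < 2 * m := lt_of_le_of_lt (by compute_degree) hj
  have h := sum_neg_one_pow_mul_choose_mul_eval_eq_zero hdeg
  simp only [Polynomial.eval_pow, Polynomial.eval_sub, Polynomial.eval_mul, Polynomial.eval_C,
    Polynomial.eval_X] at h
  rw [← mul_eq_zero_of_right ((-1) ^ m / 4 ^ m) h, mul_sum]
  refine sum_congr rfl fun i _ => ?_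
  ring

theorem sum_range_two_mul_add_one_eq {M : Type*} [AddCommMonoid M] (f : ℕ → M) (m : ℕ) :
    ∑ i ∈ range (2 * m + 1), f i = f m + ∑ k ∈ Icc 1 m, (f (m - k) + f (m + k)) := by
  have hlow : ∑ k ∈ Icc 1 m, f (m - k) = ∑ i ∈ Ico 0 m, f i := by
    rw [← Ico_add_one_right_eq_Icc, sum_Ico_reflect _ _ le_rfl]
    simp
  have hhigh : ∑ k ∈ Icc 1 m, f (m + k) = ∑ i ∈ Ico (m + 1) (2 * m + 1), f i := by
    rw [← Ico_add_one_right_eq_Icc, sum_Ico_add, add_comm 1 m, show m + 1 + m = 2 * m + 1 by ring]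
  rw [sum_add_distrib, hlow, hhigh, range_eq_Ico, ← sum_Ico_consecutive _ m.zero_le (by omega),
    sum_eq_sum_Ico_succ_bot (by omega : m < 2 * m + 1)]
  abel

theorem sum_choose_mul_pow_mul_log (m p : ℕ) (hp : 1 ≤ p) (hpm : p < m) :
    ∑ i ∈ range (2 * m + 1), (-1) ^ p * ((-1) ^ (i + m) * (2 * m).choose i / 4 ^ m) *
        (2 * i - 2 * m : ℝ) ^ (2 * p) * log |2 * i - 2 * m| =
      2 / 4 ^ m * ∑ k ∈ Icc 1 m,
        (-1) ^ (k + p) * (2 * m).choose (m - k) * (2 * k : ℝ) ^ (2 * p) * log k := by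
  set γ : ℕ → ℝ := fun i =>
    (-1) ^ p * ((-1) ^ (i + m) * (2 * m).choose i / 4 ^ m) * (2 * i - 2 * m : ℝ) ^ (2 * p)
  have hsplit (i : ℕ) :
      γ i * log |2 * i - 2 * m| = log 2 * γ i + γ i * log |(i : ℝ) - m| := by
    rcases eq_or_ne (i : ℝ) m with h | h
    · simp [γ, h, zero_pow (by omega : 2 * p ≠ 0)]
    · rw [show (2 * i - 2 * m : ℝ) = 2 * (i - m) by ring, abs_mul, abs_two,
        log_mul two_ne_zero (abs_pos.2 (sub_ne_zero.2 h)).ne']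
      ring
  have hmom : ∑ i ∈ range (2 * m + 1), γ i = 0 := by
    rw [← mul_zero ((-1 : ℝ) ^ p), ← sum_choose_mul_pow_eq_zero m (j := 2 * p) (by omega),
      mul_sum]
    exact sum_congr rfl fun i _ => mul_assoc _ _ _
  have hfold (k : ℕ) (hk : k ∈ Icc 1 m) :
      γ (m - k) * log |((m - k : ℕ) : ℝ) - m| + γ (m + k) * log |((m + k : ℕ) : ℝ) - m| =
        2 / 4 ^ m *
          ((-1) ^ (k + p) * (2 * m).choose (m - k) * (2 * k : ℝ) ^ (2 * p) * log k) := by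
    obtain ⟨hk1, hkm⟩ := mem_Icc.1 hk
    have hlow : ((m - k : ℕ) : ℝ) - m = -k := by push_cast [Nat.cast_sub hkm]; ring
    have hhigh : ((m + k : ℕ) : ℝ) - m = k := by push_cast; ring
    have hchoose : (2 * m).choose (m + k) = (2 * m).choose (m - k) := by
      rw [← Nat.choose_symm (by omega : m + k ≤ 2 * m), show 2 * m - (m + k) = m - k by omega]
    have hsign₁ : (-1 : ℝ) ^ (m - k + m) = (-1) ^ k :=
      neg_one_pow_congr (by simp only [Nat.even_iff]; omega)
    have hsign₂ : (-1 : ℝ) ^ (m + k + m) = (-1) ^ k :=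
      neg_one_pow_congr (by simp only [Nat.even_iff]; omega)
    simp only [γ, hlow, hhigh, hchoose, hsign₁, hsign₂, abs_neg, Nat.abs_cast]
    rw [show 2 * ((m - k : ℕ) : ℝ) - 2 * m = 2 * (((m - k : ℕ) : ℝ) - m) by ring,
      show 2 * ((m + k : ℕ) : ℝ) - 2 * m = 2 * (((m + k : ℕ) : ℝ) - m) by ring, hlow, hhigh,
      mul_neg, (even_two_mul p).neg_pow]
    ring
  change ∑ i ∈ range (2 * m + 1), γ i * log |2 * i - 2 * m| = _
  simp_rw [hsplit]
  rw [sum_add_distrib, ← mul_sum, hmom, mul_zero, zero_add, sum_range_two_mul_add_one_eq, mul_sum,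
    sub_self, abs_zero, log_zero, mul_zero, zero_add]
  exact sum_congr rfl hfold

theorem stmt_12 (m q : ℕ) (hq : 2 ≤ q) (hqm : q ≤ m) :
    Tendsto (fun X : ℝ => ∫ t in (0:ℝ)..X, (Real.sin t) ^ (2 * m) / t ^ (2 * q - 1)) atTop
      (nhds (1 / 2 ^ (2 * m - 1) *
        ∑ k ∈ Finset.Icc 1 m,
          (-1 : ℝ) ^ (k + q) * (Nat.choose (2 * m) (m - k) : ℝ) *
            ((2 * k : ℝ) ^ (2 * q - 2) / (Nat.factorial (2 * q - 2))) * Real.log k)) := by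
  obtain ⟨p, rfl⟩ : ∃ p, q = p + 1 := ⟨q - 1, by omega⟩
  have hlim := tendsto_integral_sum_mul_cos_div_pow (range (2 * m + 1))
    (fun i => (-1) ^ (i + m) * (2 * m).choose i / 4 ^ m) (fun i => 2 * i - 2 * m) (p := p)
    (by omega) (fun r hr => sum_choose_mul_pow_eq_zero m (by omega))
  simp_rw [← sin_pow_two_mul_eq_sum_cos, sum_choose_mul_pow_mul_log m p (by omega) (by omega)]
    at hlim
  rw [show 2 * (p + 1) - 1 = 2 * p + 1 by omega, show 2 * (p + 1) - 2 = 2 * p by omega]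
  convert hlim using 2
  have h4 : (2 : ℝ) / 4 ^ m = 1 / 2 ^ (2 * m - 1) := by
    rw [show (4 : ℝ) ^ m = 2 * 2 ^ (2 * m - 1) by
      rw [← pow_succ', show 2 * m - 1 + 1 = 2 * m by omega, pow_mul]; norm_num]
    field_simp
  rw [← h4, mul_sum, mul_sum, ← sum_neg_distrib, sum_div]
  refine sum_congr rfl fun k _ => ?_
  ring
end

section
/- For integers m, q with 2 ≤ q ≤ m, Σ_{k=1}^m (−1)^{k+q} C(2m, m−k) (2k)^{2q−2} = 0. -/
open Finset

lemma aux_fwdDiff_pow_zero : ∀ d : ℕ, ∀ n : ℕ, d < n →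
    (fwdDiff (1:ℤ))^[n] (fun x : ℤ => x ^ d) = 0 := by
  intro d
  induction d using Nat.strong_induction_on with
  | _ d IH =>
    intro n hn
    obtain ⟨n, rfl⟩ : ∃ k, n = k + 1 :=
      ⟨n - 1, (Nat.succ_pred_eq_of_pos (Nat.lt_of_le_of_lt (Nat.zero_le d) hn)).symm⟩
    have hΔ : fwdDiff (1:ℤ) (fun x : ℤ => x ^ d)
        = ∑ j ∈ range d, (Nat.choose d j : ℤ) • fun x : ℤ => x ^ j := by
      funext x
      simp only [fwdDiff, Finset.sum_apply, Pi.smul_apply, smul_eq_mul]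
      rw [add_pow, Finset.sum_range_succ]
      simp [mul_comm]
    rw [Function.iterate_succ_apply, hΔ, fwdDiff_iter_finset_sum]
    refine Finset.sum_eq_zero fun j hj => ?_
    rw [fwdDiff_iter_const_smul, IH j (mem_range.mp hj) n
      (lt_of_lt_of_le (mem_range.mp hj) (Nat.lt_succ_iff.mp hn)), smul_zero]

lemma aux_fwdDiff_comp_add (g : ℤ → ℤ) (c : ℤ) (n : ℕ) :
    (fwdDiff (1:ℤ))^[n] (fun x => g (x + c)) = fun x => (fwdDiff (1:ℤ))^[n] g (x + c) := by
  induction n with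
  | zero => simp
  | succ n IH =>
    rw [Function.iterate_succ_apply', IH, Function.iterate_succ_apply']
    funext x
    simp only [fwdDiff]
    ring_nf

theorem stmt_14 (m q : ℕ) (hq : 2 ≤ q) (hqm : q ≤ m) :
    ∑ k ∈ Finset.Icc 1 m,
      (-1 : ℤ) ^ (k + q) * (Nat.choose (2 * m) (m - k) : ℤ) * (2 * k : ℤ) ^ (2 * q - 2) = 0 := by
  set N := 2 * q - 2 with hN
  have hNeven : Even N := ⟨q - 1, by omega⟩
  have hNpos : 0 < N := by omega
  have hNlt : N < 2 * m := by omega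
  set f : ℤ → ℤ := fun x => (2 * (x - (m : ℤ))) ^ N with hf
  have hf0 : (fwdDiff (1:ℤ))^[2*m] f = 0 := by
    have h1 : f = (2:ℤ)^N • fun x : ℤ => (fun y : ℤ => y ^ N) (x + (-(m:ℤ))) := by
      funext x
      simp only [hf, Pi.smul_apply, smul_eq_mul, ← mul_pow]
      ring_nf
    rw [h1, fwdDiff_iter_const_smul,
      aux_fwdDiff_comp_add (fun y : ℤ => y ^ N) (-(m:ℤ)) (2*m),
      aux_fwdDiff_pow_zero N (2*m) hNlt]
    funext x
    simp
  set g : ℕ → ℤ := fun j => ((-1:ℤ) ^ (2*m - j) * ((2*m).choose j : ℤ)) * f j with hg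
  have hS : ∑ j ∈ range (2*m+1), g j = 0 := by
    have h2 := fwdDiff_iter_eq_sum_shift (1:ℤ) f (2*m) 0
    rw [hf0] at h2
    simp only [Pi.zero_apply, smul_eq_mul, zero_add, nsmul_eq_mul, mul_one] at h2
    rw [← h2]
  have hsplit : ∑ j ∈ range (2*m+1), g j
      = ∑ i ∈ range m, (g (m - 1 - i) + g (m + 1 + i)) := by
    rw [show 2*m+1 = (m+1) + m by ring, Finset.sum_range_add, Finset.sum_range_succ]
    have hgm : g m = 0 := by
      simp only [hg, hf]
      rw [sub_self, mul_zero, zero_pow hNpos.ne', mul_zero]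
    rw [hgm, add_zero, ← Finset.sum_range_reflect (fun j => g j) m, ← Finset.sum_add_distrib]
  have key : ∀ i ∈ range m, g (m - 1 - i) + g (m + 1 + i)
      = (2 * (-1:ℤ)^(m+q)) * ((-1:ℤ) ^ ((i+1) + q) * ((2*m).choose (m - (i+1)) : ℤ)
          * (2 * ((i+1:ℕ) : ℤ)) ^ N) := by
    intro i hi
    have hi' : i + 1 ≤ m := mem_range.mp hi
    set t := i + 1 with ht
    have e1 : m - 1 - i = m - t := by omega
    have e2 : m + 1 + i = m + t := by omega
    have e3 : 2*m - (m - t) = m + t := by omega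
    have e4 : 2*m - (m + t) = m - t := by omega
    have e5 : ((2*m).choose (m + t) : ℤ) = ((2*m).choose (m - t) : ℤ) := by
      rw [← Nat.choose_symm (by omega : m + t ≤ 2*m), e4]
    have e6 : ((-1:ℤ)) ^ (m - t) = (-1:ℤ) ^ (m + t) := by
      rw [show m + t = (m - t) + 2 * t by omega, pow_add, pow_mul]
      norm_num
    have e7 : (((m - t : ℕ) : ℤ)) = (m : ℤ) - t := by
      push_cast [Nat.cast_sub (by omega : t ≤ m)]; ring
    have e8 : f ((m - t : ℕ) : ℤ) = (2 * (t:ℤ)) ^ N := by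
      rw [e7]
      show (2 * ((m:ℤ) - t - m)) ^ N = _
      rw [show (2 * ((m:ℤ) - t - m)) = -(2 * t) by ring, hNeven.neg_pow]
    have e9 : f ((m + t : ℕ) : ℤ) = (2 * (t:ℤ)) ^ N := by
      show (2 * (((m + t : ℕ):ℤ) - m)) ^ N = _
      push_cast
      ring_nf
    have hq2 : (-1:ℤ)^q * (-1:ℤ)^q = 1 := by
      rw [← pow_add, ← two_mul, pow_mul]; norm_num
    have e10 : ((-1:ℤ)) ^ (m + t) = (-1:ℤ)^(m+q) * (-1:ℤ)^(t+q) := by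
      rw [pow_add, pow_add, pow_add]
      linear_combination (-((-1:ℤ)^m * (-1:ℤ)^t)) * hq2
    rw [e1, e2]
    simp only [hg, e3, e4, e5, e6, e8, e9]
    rw [e10]
    ring
  have hzero : (2 * (-1:ℤ)^(m+q)) * ∑ i ∈ range m,
      ((-1:ℤ) ^ ((i+1) + q) * ((2*m).choose (m - (i+1)) : ℤ) * (2 * ((i+1:ℕ):ℤ)) ^ N) = 0 := by
    rw [Finset.mul_sum, ← Finset.sum_congr rfl key, ← hsplit, hS]
  have h2 : (2 * (-1:ℤ)^(m+q)) ≠ 0 :=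
    mul_ne_zero two_ne_zero (pow_ne_zero _ (by norm_num))
  have hsum0 : ∑ i ∈ range m,
      ((-1:ℤ) ^ ((i+1) + q) * ((2*m).choose (m - (i+1)) : ℤ) * (2 * ((i+1:ℕ):ℤ)) ^ N) = 0 :=
    (mul_eq_zero.mp hzero).resolve_left h2
  rw [← Finset.Ico_add_one_right_eq_Icc, Finset.sum_Ico_eq_sum_range]
  rw [show m + 1 - 1 = m from rfl, ← hsum0]
  refine Finset.sum_congr rfl fun i hi => ?_
  rw [show 1 + i = i + 1 by omega]
end

section
/- For integers m, q with 1 ≤ q ≤ m, Σ_{k=0}^m (−1)^{k+q} C(2m+1, m−k) (2k+1)^{2q−1} = 0. -/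
open Finset Function fwdDiff

private lemma negpow_congr (a b : ℕ) (h : a % 2 = b % 2) : (-1 : ℤ) ^ a = (-1) ^ b := by
  rcases Nat.even_or_odd a with ha | ha
  · have hb : Even b := by rw [Nat.even_iff] at *; omega
    rw [ha.neg_one_pow, hb.neg_one_pow]
  · have hb : Odd b := by rw [Nat.odd_iff] at *; omega
    rw [ha.neg_one_pow, hb.neg_one_pow]

private lemma fd_monomial (d : ℕ) : ∀ n, d < n →
    (fwdDiff (1:ℕ))^[n] (fun x : ℕ => (x : ℤ) ^ d) = fun _ => 0 := by
  induction d using Nat.strong_induction_on with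
  | _ d IH =>
    intro n hn
    obtain ⟨n', rfl⟩ : ∃ n', n = n' + 1 := ⟨n - 1, by omega⟩
    rw [Function.iterate_succ_apply]
    have hΔ : fwdDiff (1:ℕ) (fun x : ℕ => (x : ℤ) ^ d)
        = ∑ i ∈ range d, (d.choose i : ℤ) • (fun x : ℕ => (x : ℤ) ^ i) := by
      funext x
      simp only [fwdDiff, Finset.sum_apply, Pi.smul_apply, smul_eq_mul]
      push_cast
      rw [add_pow, Finset.sum_range_succ]
      simp [mul_comm]
    rw [hΔ, fwdDiff_iter_finset_sum]
    funext y
    rw [Finset.sum_apply]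
    apply Finset.sum_eq_zero
    intro i hi
    rw [fwdDiff_iter_const_smul, IH i (mem_range.mp hi) n' (by
      have := mem_range.mp hi; omega)]
    simp

theorem stmt_15 (m q : ℕ) (hq : 1 ≤ q) (hqm : q ≤ m) :
    ∑ k ∈ Finset.range (m + 1),
      (-1 : ℤ) ^ (k + q) * (Nat.choose (2 * m + 1) (m - k) : ℤ) * (2 * k + 1 : ℤ) ^ (2 * q - 1) = 0 := by
  set D := 2 * q - 1 with hD
  have hDodd : Odd D := ⟨q - 1, by omega⟩
  set f : ℕ → ℤ := fun x => (2 * (m : ℤ) + 1 - 2 * x) ^ D with hf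
  -- Step 1: the (2m+1)-th forward difference of f at 0 vanishes
  have hf0 : (fwdDiff (1:ℕ))^[2*m+1] f 0 = 0 := by
    have hexp : f = ∑ i ∈ range (D + 1),
        ((2 * (m : ℤ) + 1) ^ (D - i) * (-2) ^ i * (D.choose i)) • (fun x : ℕ => (x : ℤ) ^ i) := by
      funext x
      simp only [hf]
      rw [show (2 * (m : ℤ) + 1 - 2 * x) = (-2 * (x : ℤ)) + (2 * m + 1) by ring, add_pow]
      simp only [Finset.sum_apply, Pi.smul_apply, smul_eq_mul]
      refine Finset.sum_congr rfl fun i hi => ?_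
      ring
    rw [hexp, fwdDiff_iter_finset_sum]
    rw [Finset.sum_apply]
    apply Finset.sum_eq_zero
    intro i hi
    have hi' : i < 2 * m + 1 := by have := mem_range.mp hi; omega
    rw [fwdDiff_iter_const_smul, fd_monomial i (2 * m + 1) hi']
    simp
  -- Step 2: express as alternating sum
  set T : ℕ → ℤ := fun j => (-1 : ℤ) ^ (2 * m + 1 - j) * ((2 * m + 1).choose j : ℤ) * f j with hT
  have hsum : ∑ j ∈ range (2 * m + 1 + 1), T j = 0 := by
    rw [← hf0, fwdDiff_iter_eq_sum_shift (1 : ℕ) f (2 * m + 1) 0]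
    refine Finset.sum_congr rfl fun j hj => ?_
    simp only [hT, smul_eq_mul, mul_one, zero_add, mul_assoc]
  -- Step 3: halve the sum by symmetry
  have hhalf : ∑ j ∈ range (m + 1), T j = 0 := by
    have hpair : ∀ i, i ≤ m → T (m + 1 + i) = T (m - i) := by
      intro i hi
      have e1 : 2 * m + 1 - (m + 1 + i) = m - i := by omega
      have e2 : 2 * m + 1 - (m - i) = m + 1 + i := by omega
      have hch : (2 * m + 1).choose (m + 1 + i) = (2 * m + 1).choose (m - i) := by
        rw [← Nat.choose_symm (show m + 1 + i ≤ 2 * m + 1 by omega), e1]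
      have hfe : f (m + 1 + i) = - f (m - i) := by
        simp only [hf]
        rw [← hDodd.neg_pow]
        congr 1
        push_cast [Nat.cast_sub hi]
        ring
      simp only [hT, e1, e2, hch, hfe]
      rw [negpow_congr (m - i) (m + 1 + i + 1) (by omega), pow_succ]
      ring
    have hsplit : ∑ j ∈ range (2 * m + 1 + 1), T j
        = ∑ j ∈ range (m + 1), T j + ∑ i ∈ range (m + 1), T (m + 1 + i) := by
      rw [← Finset.sum_range_add_sum_Ico T (show m + 1 ≤ 2 * m + 1 + 1 by omega),
        Finset.sum_Ico_eq_sum_range, show 2 * m + 1 + 1 - (m + 1) = m + 1 by omega]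
    have hrefl : ∑ i ∈ range (m + 1), T (m + 1 + i) = ∑ j ∈ range (m + 1), T j := by
      calc ∑ i ∈ range (m + 1), T (m + 1 + i) = ∑ i ∈ range (m + 1), T (m - i) :=
            Finset.sum_congr rfl fun i hi => hpair i (by have := mem_range.mp hi; omega)
        _ = ∑ j ∈ range (m + 1), T j := by
            have h := Finset.sum_range_reflect T (m + 1)
            simpa using h
    rw [hsplit, hrefl] at hsum
    linarith
  -- Step 4: relate the goal to the halved sum
  have hgoal : ∀ j ∈ range (m + 1),
      (-1 : ℤ) ^ ((m + 1 - 1 - j) + q) * ((2 * m + 1).choose (m - (m + 1 - 1 - j)) : ℤ)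
          * (2 * ((m + 1 - 1 - j : ℕ) : ℤ) + 1) ^ D
        = (-1 : ℤ) ^ (m + 1 + q) * T j := by
    intro j hj
    have hj' : j ≤ m := by have := mem_range.mp hj; omega
    have e3 : m - (m + 1 - 1 - j) = j := by omega
    have e4 : (2 * ((m + 1 - 1 - j : ℕ) : ℤ) + 1) ^ D = f j := by
      simp only [hf]
      congr 1
      have e5 : m + 1 - 1 - j = m - j := by omega
      rw [e5, Nat.cast_sub hj']
      ring
    rw [e3, e4,
      negpow_congr ((m + 1 - 1 - j) + q) ((m + 1 + q) + (2 * m + 1 - j)) (by omega), pow_add,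
      hT]
    ring
  calc ∑ k ∈ Finset.range (m + 1),
        (-1 : ℤ) ^ (k + q) * (Nat.choose (2 * m + 1) (m - k) : ℤ) * (2 * k + 1 : ℤ) ^ D
      = ∑ j ∈ range (m + 1),
        (-1 : ℤ) ^ ((m + 1 - 1 - j) + q) * ((2 * m + 1).choose (m - (m + 1 - 1 - j)) : ℤ)
          * (2 * ((m + 1 - 1 - j : ℕ) : ℤ) + 1) ^ D :=
        (Finset.sum_range_reflect _ _).symm
    _ = ∑ j ∈ range (m + 1), (-1 : ℤ) ^ (m + 1 + q) * T j := Finset.sum_congr rfl hgoal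
    _ = 0 := by rw [← Finset.mul_sum, hhalf, mul_zero]
end

section
/- ∫₀^∞ (sin t)⁴/t³ dt = ln 2. -/
/-!
Integrating by parts twice writes `∫₀^X sin⁴ t / t³ dt` as boundary terms of size `O(1/X)` plus
`∫₀^X (cos 2t - cos 4t) / t dt`. Substituting `u = a t` in `∫₀^X (cos (a t) - 1) / t dt` turns the
latter into `log 2 - ∫_{2X}^{4X} cos u / u du` (Frullani), and one more integration by parts shows
that this last integral is `O(1/X)`.
-/

open Real Filter MeasureTheory Topology Set

lemma cos_sub_one_div_eq_neg_sin_mul_sinc (u : ℝ) :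
    (cos u - 1) / u = -(sin (u / 2) * sinc (u / 2)) := by
  rcases eq_or_ne u 0 with rfl | hu
  · simp
  · have h := cos_sub_cos u 0
    rw [cos_zero, add_zero, sub_zero] at h
    rw [h, sinc_of_ne_zero (by positivity)]
    field_simp

lemma continuous_cos_sub_one_div : Continuous fun u : ℝ => (cos u - 1) / u := by
  simp only [cos_sub_one_div_eq_neg_sin_mul_sinc]
  fun_prop

lemma mul_cos_mul_sub_one_div_mul (a t : ℝ) :
    a * ((cos (a * t) - 1) / (a * t)) = (cos (a * t) - 1) / t := by
  rcases eq_or_ne a 0 with rfl | ha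
  · simp
  rcases eq_or_ne t 0 with rfl | ht
  · simp
  field_simp

lemma continuous_cos_mul_sub_one_div (a : ℝ) :
    Continuous fun t : ℝ => (cos (a * t) - 1) / t := by
  simp only [← mul_cos_mul_sub_one_div_mul]
  exact continuous_const.mul (continuous_cos_sub_one_div.comp (continuous_const_mul a))

lemma integral_cos_mul_sub_one_div (a X : ℝ) :
    ∫ t in 0..X, (cos (a * t) - 1) / t = ∫ u in 0..a * X, (cos u - 1) / u := by
  simp only [← mul_cos_mul_sub_one_div_mul, intervalIntegral.integral_const_mul]
  simpa using intervalIntegral.mul_integral_comp_mul_left (a := 0) (b := X)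
    (f := fun u => (cos u - 1) / u) a

lemma continuous_cos_mul_sub_cos_mul_div (a b : ℝ) :
    Continuous fun t : ℝ => (cos (a * t) - cos (b * t)) / t := by
  have h : (fun t : ℝ => (cos (a * t) - cos (b * t)) / t)
      = fun t => (cos (a * t) - 1) / t - (cos (b * t) - 1) / t := by
    funext t
    ring
  rw [h]
  exact (continuous_cos_mul_sub_one_div a).sub (continuous_cos_mul_sub_one_div b)

lemma lt_of_mem_uIcc {α : Type*} [LinearOrder α] {a p q u : α} (hp : a < p) (hq : a < q)
    (hu : u ∈ uIcc p q) : a < u :=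
  (lt_min hp hq).trans_le hu.1

lemma integral_cos_mul_sub_cos_mul_div {a b X : ℝ} (ha : 0 < a) (hb : 0 < b) (hX : 0 < X) :
    ∫ t in 0..X, (cos (a * t) - cos (b * t)) / t
      = log (b / a) - ∫ u in a * X..b * X, cos u / u := by
  have hint (c d : ℝ) : IntervalIntegrable (fun u : ℝ => (cos u - 1) / u) volume c d :=
    continuous_cos_sub_one_div.intervalIntegrable c d
  have hpos : ∀ u ∈ uIcc (a * X) (b * X), u ≠ 0 := fun u hu =>
    (lt_of_mem_uIcc (by positivity) (by positivity) hu).ne'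
  have hcos : IntervalIntegrable (fun u => cos u / u) volume (a * X) (b * X) :=
    (continuousOn_cos.div continuousOn_id hpos).intervalIntegrable
  have hinv : IntervalIntegrable (fun u : ℝ => 1 / u) volume (a * X) (b * X) :=
    (continuousOn_const.div continuousOn_id hpos).intervalIntegrable
  calc ∫ t in 0..X, (cos (a * t) - cos (b * t)) / t
      = (∫ t in 0..X, (cos (a * t) - 1) / t) - ∫ t in 0..X, (cos (b * t) - 1) / t := by
        rw [← intervalIntegral.integral_sub]
        · simp_rw [← sub_div, sub_sub_sub_cancel_right]
        all_goals exact (continuous_cos_mul_sub_one_div _).intervalIntegrable _ _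
    _ = -∫ u in a * X..b * X, (cos u - 1) / u := by
        rw [integral_cos_mul_sub_one_div, integral_cos_mul_sub_one_div,
          intervalIntegral.integral_interval_sub_left (hint _ _) (hint _ _),
          intervalIntegral.integral_symm]
    _ = log (b / a) - ∫ u in a * X..b * X, cos u / u := by
        simp_rw [sub_div]
        rw [intervalIntegral.integral_sub hcos hinv,
          integral_one_div_of_pos (by positivity) (by positivity), mul_div_mul_right _ _ hX.ne']
        ring

lemma abs_integral_cos_div_le {p q : ℝ} (hp : 0 < p) (hpq : p ≤ q) :
    |∫ u in p..q, cos u / u| ≤ 2 / p := by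
  have hq : 0 < q := hp.trans_le hpq
  have hne : ∀ u ∈ uIcc p q, u ≠ 0 := fun u hu => (lt_of_mem_uIcc hp hq hu).ne'
  have hinv_sq : ContinuousOn (fun u : ℝ => (u ^ 2)⁻¹) (uIcc p q) :=
    (continuousOn_pow 2).inv₀ fun u hu => pow_ne_zero 2 (hne u hu)
  have hparts : ∫ u in p..q, cos u / u
      = q⁻¹ * sin q - p⁻¹ * sin p - ∫ u in p..q, -(u ^ 2)⁻¹ * sin u := by
    simp_rw [div_eq_inv_mul]
    exact intervalIntegral.integral_mul_deriv_eq_deriv_mul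
      (fun u hu => hasDerivAt_inv (hne u hu)) (fun u _ => hasDerivAt_sin u)
      hinv_sq.neg.intervalIntegrable (continuous_cos.intervalIntegrable _ _)
  have hrem : |∫ u in p..q, -(u ^ 2)⁻¹ * sin u| ≤ p⁻¹ - q⁻¹ :=
    calc |∫ u in p..q, -(u ^ 2)⁻¹ * sin u| ≤ ∫ u in p..q, |-(u ^ 2)⁻¹ * sin u| :=
          intervalIntegral.abs_integral_le_integral_abs hpq
      _ ≤ ∫ u in p..q, (u ^ 2)⁻¹ := by
          refine intervalIntegral.integral_mono_on hpq ?_ hinv_sq.intervalIntegrable fun u hu => ?_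
          · exact ((hinv_sq.neg.mul continuous_sin.continuousOn).abs).intervalIntegrable
          · rw [abs_mul, abs_neg, abs_of_pos (by have := hp.trans_le hu.1; positivity)]
            exact mul_le_of_le_one_right (by positivity) (abs_sin_le_one u)
      _ = p⁻¹ - q⁻¹ := by
          rw [intervalIntegral.integral_eq_sub_of_hasDerivAt (f := fun u => -u⁻¹)
            (fun u hu => (hasDerivAt_inv (hne u hu)).neg.congr_deriv (neg_neg _))
            hinv_sq.intervalIntegrable]
          ring
  have hterm {x : ℝ} (hx : 0 < x) : |x⁻¹ * sin x| ≤ x⁻¹ := by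
    rw [abs_mul, abs_of_pos (inv_pos.2 hx)]
    exact mul_le_of_le_one_right (by positivity) (abs_sin_le_one x)
  rw [hparts, abs_le]
  obtain ⟨hq₁, hq₂⟩ := abs_le.1 (hterm hq)
  obtain ⟨hp₁, hp₂⟩ := abs_le.1 (hterm hp)
  obtain ⟨hr₁, hr₂⟩ := abs_le.1 hrem
  constructor <;> linarith [div_eq_mul_inv 2 p]

lemma tendsto_integral_cos_div_atTop {a b : ℝ} (ha : 0 < a) (hb : 0 < b) :
    Tendsto (fun X => ∫ u in a * X..b * X, cos u / u) atTop (𝓝 0) := by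
  wlog hab : a ≤ b generalizing a b
  · refine (neg_zero (G := ℝ) ▸ (this hb ha (le_of_not_ge hab)).neg).congr fun X => ?_
    rw [intervalIntegral.integral_symm, neg_neg]
  have hbound : Tendsto (fun X => 2 / (a * X)) atTop (𝓝 0) :=
    tendsto_const_nhds.div_atTop (tendsto_id.const_mul_atTop ha)
  refine squeeze_zero_norm' ?_ hbound
  filter_upwards [eventually_gt_atTop 0] with X hX
  exact abs_integral_cos_div_le (by positivity) (by gcongr)

theorem tendsto_integral_cos_mul_sub_cos_mul_div {a b : ℝ} (ha : 0 < a) (hb : 0 < b) :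
    Tendsto (fun X => ∫ t in 0..X, (cos (a * t) - cos (b * t)) / t) atTop
      (𝓝 (log (b / a))) := by
  have h := (tendsto_const_nhds (x := log (b / a))).sub (tendsto_integral_cos_div_atTop ha hb)
  rw [sub_zero] at h
  refine h.congr' ?_
  filter_upwards [eventually_gt_atTop 0] with X hX
  exact (integral_cos_mul_sub_cos_mul_div ha hb hX).symm

lemma sin_pow_four_div_pow_three_eq_sin_mul_sinc_pow (t : ℝ) :
    sin t ^ 4 / t ^ 3 = sin t * sinc t ^ 3 := by
  rcases eq_or_ne t 0 with rfl | ht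
  · simp
  · rw [sinc_of_ne_zero ht]
    field_simp

/-- Two integrations by parts, using `(sin⁴ t)' = 2 sin² t sin 2t` and
`(sin² t sin 2t)' = cos 2t - cos 4t`. -/
noncomputable def sinPowFourDivCubePrimitive (Y : ℝ) : ℝ :=
  -(sin Y ^ 4 / (2 * Y ^ 2)) - sin Y ^ 2 * sin (2 * Y) / Y
    + ∫ t in 0..Y, (cos (2 * t) - cos (4 * t)) / t

lemma sinPowFourDivCubePrimitive_eq_sinc (Y : ℝ) :
    sinPowFourDivCubePrimitive Y = -((sin Y * sinc Y) ^ 2 / 2) - sin Y * sin (2 * Y) * sinc Y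
      + ∫ t in 0..Y, (cos (2 * t) - cos (4 * t)) / t := by
  rw [sinPowFourDivCubePrimitive]
  rcases eq_or_ne Y 0 with rfl | hY
  · simp
  · rw [sinc_of_ne_zero hY]
    congr 1
    field_simp

lemma continuous_sinPowFourDivCubePrimitive : Continuous sinPowFourDivCubePrimitive := by
  have hprim := (continuous_cos_mul_sub_cos_mul_div 2 4).integral_hasStrictDerivAt 0
  simp only [funext sinPowFourDivCubePrimitive_eq_sinc]
  have : Continuous fun Y => ∫ t in 0..Y, (cos (2 * t) - cos (4 * t)) / t :=
    continuous_iff_continuousAt.2 fun Y => (hprim Y).hasDerivAt.continuousAt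
  fun_prop

lemma cos_two_mul_sub_cos_four_mul (x : ℝ) :
    cos (2 * x) - cos (4 * x) = 2 * sin x * (sin (2 * x) * cos x + cos (2 * x) * sin x) := by
  rw [← sin_add, cos_sub_cos]
  ring_nf
  rw [sin_neg]
  ring

lemma hasDerivAt_sinPowFourDivCubePrimitive {Y : ℝ} (hY : Y ≠ 0) :
    HasDerivAt sinPowFourDivCubePrimitive (sin Y ^ 4 / Y ^ 3) Y := by
  have hA := ((hasDerivAt_sin Y).pow 4).div ((hasDerivAt_pow 2 Y).const_mul 2) (by positivity)
  have hB := (((hasDerivAt_sin Y).pow 2).mul ((hasDerivAt_id Y).const_mul 2).sin).div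
    (hasDerivAt_id Y) hY
  have hC := ((continuous_cos_mul_sub_cos_mul_div 2 4).integral_hasStrictDerivAt 0 Y).hasDerivAt
  refine ((hA.neg.sub hB).add hC).congr_deriv ?_
  simp only [id, Nat.cast_ofNat, Pi.pow_apply, Pi.mul_apply, cos_two_mul_sub_cos_four_mul]
  rw [sin_two_mul]
  field_simp
  ring

lemma integral_sin_pow_four_div_pow_three {X : ℝ} (hX : 0 ≤ X) :
    ∫ t in 0..X, sin t ^ 4 / t ^ 3 = sinPowFourDivCubePrimitive X := by
  have hcont : Continuous fun t : ℝ => sin t ^ 4 / t ^ 3 := by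
    simp only [sin_pow_four_div_pow_three_eq_sin_mul_sinc_pow]
    fun_prop
  rw [intervalIntegral.integral_eq_sub_of_hasDerivAt_of_le hX
    continuous_sinPowFourDivCubePrimitive.continuousOn
    (fun t ht => hasDerivAt_sinPowFourDivCubePrimitive ht.1.ne') (hcont.intervalIntegrable _ _)]
  simp [sinPowFourDivCubePrimitive]

lemma tendsto_div_atTop_of_abs_le {α : Type*} {l : Filter α} {f g : α → ℝ} {C : ℝ}
    (hf : ∀ x, |f x| ≤ C) (hg : Tendsto g l atTop) : Tendsto (fun x => f x / g x) l (𝓝 0) :=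
  tendsto_bdd_div_atTop_nhds_zero (.of_forall fun x => neg_le_of_abs_le (hf x))
    (.of_forall fun x => le_of_abs_le (hf x)) hg

lemma tendsto_sinPowFourDivCubePrimitive_atTop :
    Tendsto sinPowFourDivCubePrimitive atTop (𝓝 (log 2)) := by
  have hA : Tendsto (fun Y => sin Y ^ 4 / (2 * Y ^ 2)) atTop (𝓝 0) := by
    refine tendsto_div_atTop_of_abs_le (C := 1) (fun Y => ?_)
      ((tendsto_pow_atTop two_ne_zero).const_mul_atTop two_pos)
    rw [abs_pow]
    exact pow_le_one₀ (abs_nonneg _) (abs_sin_le_one Y)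
  have hB : Tendsto (fun Y => sin Y ^ 2 * sin (2 * Y) / Y) atTop (𝓝 0) := by
    refine tendsto_div_atTop_of_abs_le (C := 1) (fun Y => ?_) tendsto_id
    rw [abs_mul, abs_pow]
    exact mul_le_one₀ (pow_le_one₀ (abs_nonneg _) (abs_sin_le_one Y)) (abs_nonneg _)
      (abs_sin_le_one _)
  have hC := tendsto_integral_cos_mul_sub_cos_mul_div (a := 2) (b := 4) two_pos four_pos
  have h := (hA.neg.sub hB).add hC
  rw [neg_zero, sub_zero, zero_add, show (4 : ℝ) / 2 = 2 by norm_num] at h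
  exact h

theorem stmt_17 :
    Tendsto (fun X : ℝ => ∫ t in (0:ℝ)..X, (Real.sin t) ^ 4 / t ^ 3) atTop
      (nhds (Real.log 2)) := by
  refine tendsto_sinPowFourDivCubePrimitive_atTop.congr' ?_
  filter_upwards [eventually_ge_atTop 0] with X hX
  exact (integral_sin_pow_four_div_pow_three hX).symm
end
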